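/- arXiv:1512.01821 — 5 statements merged into one kernel-verified Lean document; each statement's English description precedes it below -/
import Mathlib

section
/- Let G be a graph, O an orientation of G, and e an edge of G. Then e belongs to a directed cut of O if and only if e does not belong to a directed cycle of O. In particular, the set of edges lying on directed cuts of O and the set of edges lying on directed cycles of O partition E(G). -/
open scoped Classical

/-- A multigraph with a fixed reference orientation: each edge `e` has a
source `src e` and a target `tgt e` (the positive direction `e⁺ = (src e, tgt e)`). -/
structure OrGraph (V E : Type) where
  src : E → V
  tgt : E → V

namespace OrGraph

variable {V E : Type} (G : OrGraph V E)

/-- Two vertices are joined by some edge of `S`. -/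
def step (S : Set E) (a b : V) : Prop :=
  ∃ e ∈ S, (G.src e = a ∧ G.tgt e = b) ∨ (G.src e = b ∧ G.tgt e = a)

/-- `κ(S)`: the number of connected components of the spanning subgraph `(V, S)`. -/
noncomputable def kappa (S : Set E) : ℕ :=
  Nat.card (Quot (G.step S))

/-- A cut of `G`: a minimal nonempty edge set whose removal increases the
number of connected components. -/
def IsCut (C : Set E) : Prop :=
  C.Nonempty ∧ G.kappa Cᶜ > G.kappa Set.univ ∧
    ∀ C' : Set E, C' ⊂ C → C'.Nonempty → ¬ (G.kappa C'ᶜ > G.kappa Set.univ)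

/-- A cycle of `G`: a minimal nonempty edge set meeting no cut of `G` in
precisely one element. -/
def IsCycle (C : Set E) : Prop :=
  C.Nonempty ∧ (∀ Cu : Set E, G.IsCut Cu → (Cu ∩ C).ncard ≠ 1) ∧
    ∀ C' : Set E, C' ⊂ C → C'.Nonempty →
      ¬ (∀ Cu : Set E, G.IsCut Cu → (Cu ∩ C').ncard ≠ 1)

/-- Head of edge `e` under orientation `O` (`O e = true` means the reference
direction `src e → tgt e`). -/
def ohead (O : E → Bool) (e : E) : V := if O e then G.tgt e else G.src e

/-- Tail of edge `e` under orientation `O`. -/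
def otail (O : E → Bool) (e : E) : V := if O e then G.src e else G.tgt e

/-- Edge `e` crosses the vertex set `U` (exactly one endpoint in `U`). -/
def crossing (U : Set V) (e : E) : Prop := G.src e ∈ U ↔ G.tgt e ∉ U

/-- A directed cut of the orientation `O`: a cut all of whose edges are
oriented consistently out of some vertex set `U`. -/
def IsDirCut (O : E → Bool) (C : Set E) : Prop :=
  G.IsCut C ∧ ∃ U : Set V, (∀ e, e ∈ C ↔ G.crossing U e) ∧ ∀ e ∈ C, G.otail O e ∈ U

/-- A directed cycle of the orientation `O`: a cycle oriented consistently,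
i.e. in-degree equals out-degree at each vertex within the cycle. -/
def IsDirCycle (O : E → Bool) (C : Set E) : Prop :=
  G.IsCycle C ∧ ∀ v : V,
    {e ∈ C | G.ohead O e = v}.ncard = {e ∈ C | G.otail O e = v}.ncard

section Activities

variable [LinearOrder E]

/-- `Î(S)`: cut active edges of the spanning subgraph `S`. -/
def Iact (S : Set E) : Set E :=
  {e | ∃ C : Set E, G.IsCut C ∧ e ∈ C ∧ (∀ f ∈ C, f ≠ e → f ∉ S) ∧ ∀ f ∈ C, e ≤ f}

/-- `L̂(S)`: cycle active edges of the spanning subgraph `S`. -/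
def Lact (S : Set E) : Set E :=
  {e | ∃ C : Set E, G.IsCycle C ∧ e ∈ C ∧ (∀ f ∈ C, f = e ∨ f ∈ S) ∧ ∀ f ∈ C, e ≤ f}

/-- `I(O)`: cut active edges of the orientation `O`. -/
def Ior (O : E → Bool) : Set E :=
  {e | ∃ C : Set E, G.IsDirCut O C ∧ e ∈ C ∧ ∀ f ∈ C, e ≤ f}

/-- `L(O)`: cycle active edges of the orientation `O`. -/
def Lor (O : E → Bool) : Set E :=
  {e | ∃ C : Set E, G.IsDirCycle O C ∧ e ∈ C ∧ ∀ f ∈ C, e ≤ f}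

end Activities

/-- The Tutte polynomial via the corank-nullity expansion, evaluated in a
commutative ring. -/
noncomputable def tutte [Fintype V] [Fintype E] (R : Type) [CommRing R] (x y : R) : R :=
  ∑ S : Finset E, (x - 1) ^ (G.kappa ↑S - G.kappa Set.univ) *
    (y - 1) ^ (S.card + G.kappa ↑S - Fintype.card V)

/-! ### Fourientations.
A fourientation is `F : E → Bool × Bool`, recording whether `e⁺` resp. `e⁻`
belongs to the fourientation. -/

/-- A potential cut of the fourientation `F`: a directed cut each of whose
edges is unoriented in `F` or oriented in the cut direction (out of `U`). -/
def PotCut (F : E → Bool × Bool) (C : Set E) : Prop :=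
  G.IsCut C ∧ ∃ U : Set V, (∀ e, e ∈ C ↔ G.crossing U e) ∧
    ∀ e ∈ C, (G.src e ∈ U → (F e).2 = false) ∧ (G.src e ∉ U → (F e).1 = false)

/-- A potential cycle of the fourientation `F`, with cyclic direction `dir`:
a consistently directed cycle each of whose edges has its `dir`-direction
present in `F` (so each edge is bioriented or oriented in the cycle direction). -/
def PotCycle (F : E → Bool × Bool) (C : Set E) (dir : E → Bool) : Prop :=
  G.IsCycle C ∧
    (∀ v : V, {e ∈ C | G.ohead dir e = v}.ncard = {e ∈ C | G.otail dir e = v}.ncard) ∧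
    ∀ e ∈ C, (if dir e then (F e).1 else (F e).2) = true

/-- Add the direction `d` of edge `e` to the fourientation `F`. -/
def addDir [DecidableEq E] (F : E → Bool × Bool) (e : E) (d : Bool) : E → Bool × Bool :=
  Function.update F e (if d then (true, (F e).2) else ((F e).1, true))

/-- Remove the direction `d` of edge `e` from the fourientation `F`. -/
def remDir [DecidableEq E] (F : E → Bool × Bool) (e : E) (d : Bool) : E → Bool × Bool :=
  Function.update F e (if d then (false, (F e).2) else ((F e).1, false))

/-- `ᵉO`: toggle the status of the edge `e` in the fourientation `F`. -/
def toggle [DecidableEq E] (F : E → Bool × Bool) (e : E) : E → Bool × Bool :=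
  Function.update F e ((F e).2, (F e).1)

section FourActivities

variable [LinearOrder E]

/-- `I^o(O)`: oriented edges that are minimal in some potential cut. -/
def Io (F : E → Bool × Bool) : Set E :=
  {f | (F f).1 ≠ (F f).2 ∧ ∃ C : Set E, G.PotCut F C ∧ f ∈ C ∧ ∀ g ∈ C, f ≤ g}

/-- `L^o(O)`: oriented edges that are minimal in some potential cycle. -/
def Lo (F : E → Bool × Bool) : Set E :=
  {f | (F f).1 ≠ (F f).2 ∧
    ∃ (C : Set E) (dir : E → Bool), G.PotCycle F C dir ∧ f ∈ C ∧ ∀ g ∈ C, f ≤ g}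

/-- `I^u(O)`: unoriented edges `f` minimal in some potential cut of
`O ∪ {f^{σᵤ(f)}}`. -/
def Iu (σu : E → Bool) (F : E → Bool × Bool) : Set E :=
  {f | F f = (false, false) ∧
    ∃ C : Set E, G.PotCut (addDir F f (σu f)) C ∧ f ∈ C ∧ ∀ g ∈ C, f ≤ g}

/-- `L^b(O)`: bioriented edges `f` minimal in some potential cycle of
`O \ {f^{σ_b(f)}}`. -/
def Lb (σb : E → Bool) (F : E → Bool × Bool) : Set E :=
  {f | F f = (true, true) ∧
    ∃ (C : Set E) (dir : E → Bool),
      G.PotCycle (remDir F f (σb f)) C dir ∧ f ∈ C ∧ ∀ g ∈ C, f ≤ g}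

end FourActivities

/-- The deletion `G − e`. -/
def del (e : E) : OrGraph V {f : E // f ≠ e} :=
  ⟨fun f => G.src f.1, fun f => G.tgt f.1⟩

/-- The contraction `G/e`: identify the endpoints of `e` and remove `e`. -/
def contr (e : E) : OrGraph (Quot (fun a b => a = G.src e ∧ b = G.tgt e)) {f : E // f ≠ e} :=
  ⟨fun f => Quot.mk _ (G.src f.1), fun f => Quot.mk _ (G.tgt f.1)⟩

/-! ### Potential walks in a fourientation. A walk step is a pair `(e, d)` of an
edge and a chosen direction (`d = true` for the reference direction). -/

/-- Tail of the directed edge `(e, d)`. -/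
def ftail (p : E × Bool) : V := if p.2 then G.src p.1 else G.tgt p.1

/-- Head of the directed edge `(e, d)`. -/
def fhead (p : E × Bool) : V := if p.2 then G.tgt p.1 else G.src p.1

/-- The direction `d` of `e` is present in the fourientation `F`. -/
def present (F : E → Bool × Bool) (p : E × Bool) : Prop :=
  (if p.2 then (F p.1).1 else (F p.1).2) = true

/-- A potential walk of the fourientation `F` from `a` to `b`: each step uses
a direction present in `F` (so each edge is bioriented or oriented
consistently with the walk). -/
def IsPWalk (F : E → Bool × Bool) : V → List (E × Bool) → V → Prop
  | a, [], b => a = b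
  | a, p :: rest, b => G.ftail p = a ∧ present F p ∧ IsPWalk F (G.fhead p) rest b

/-- A potential path: a potential walk visiting pairwise distinct vertices. -/
def IsPPath (F : E → Bool × Bool) (a : V) (w : List (E × Bool)) (b : V) : Prop :=
  G.IsPWalk F a w b ∧ (a :: w.map G.fhead).Nodup

end OrGraph

/-!
A directed cut, all of whose edges leave a vertex set `U`, is disjoint from every balanced edge
set `D` (in-degree equal to out-degree at every vertex), in particular from every directed cycle:
summing the degree condition over `U`, the edges of `D` with tail in `U` are as many as those with
head in `U`, so as none of them enters `U`, none leaves `U`, whereas every edge of the cut does.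

Conversely, let `U` be the set of vertices reachable from the head of `e` by directed walks. If the
tail of `e` is not in `U`, then every edge between `U` and `Uᶜ` enters `U`, and a bond through `e`
extracted from this edge cut is a directed cut. Otherwise a simple directed path from the head of
`e` back to its tail closes up with `e`, so `e` lies in a vertex-disjoint union of directed cycles,
and an inclusion-minimal such union `D` is a directed cycle. Indeed, cycles being defined through
cuts, they are exactly the minimal nonempty edge sets without bridges; and if `D' ⊂ D` has no
bridges, then `D'` and `D \ D'` are both smaller unions of disjoint directed cycles.
-/

lemma Set.ncard_sep_mem_eq_sum {α β : Type*} [Finite α] [Fintype β] (s : Set α)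
    (φ : α → β) (U : Set β) :
    {x ∈ s | φ x ∈ U}.ncard = ∑ b ∈ U.toFinset, {x ∈ s | φ x = b}.ncard := by
  have := Fintype.ofFinite α
  simp only [Set.ncard_eq_toFinset_card']
  rw [Finset.card_eq_sum_card_fiberwise (f := φ) (t := U.toFinset) fun x hx => by simp_all]
  refine Finset.sum_congr rfl fun b hb => congrArg Finset.card ?_
  ext x
  simp only [Set.mem_toFinset] at hb
  simp only [Finset.mem_filter, Set.mem_toFinset, Set.mem_ofPred_eq]
  grind

namespace OrGraph

variable {V E : Type} {G : OrGraph V E} {O : E → Bool}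

lemma crossing_compl {X : Set V} {f : E} : G.crossing Xᶜ f ↔ G.crossing X f := by
  unfold crossing
  simp only [Set.mem_compl_iff]
  tauto

lemma crossing_iff_otail_mem_iff (O : E → Bool) {U : Set V} {f : E} :
    G.crossing U f ↔ (G.otail O f ∈ U ↔ G.ohead O f ∉ U) := by
  unfold crossing otail ohead
  cases O f <;> simp only [Bool.false_eq_true, ↓reduceIte]
  tauto

lemma otail_mem_iff_of_not_crossing {U : Set V} {f : E} (h : ¬ G.crossing U f) :
    G.otail O f ∈ U ↔ G.ohead O f ∈ U := by
  rw [crossing_iff_otail_mem_iff O] at h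
  tauto

lemma ohead_not : G.ohead (fun f => !O f) = G.otail O := by
  funext f
  unfold ohead otail
  cases h : O f <;> simp [h]

lemma otail_not : G.otail (fun f => !O f) = G.ohead O := by
  funext f
  unfold ohead otail
  cases h : O f <;> simp [h]

/-! ### Connectivity in spanning subgraphs -/

def Reachable (G : OrGraph V E) (S : Set E) : V → V → Prop := Relation.EqvGen (G.step S)

def component (G : OrGraph V E) (S : Set E) (a : V) : Set V := {v | G.Reachable S a v}

variable {S T : Set E} {a b c : V} {f : E}

lemma Reachable.refl (S : Set E) (a : V) : G.Reachable S a a := Relation.EqvGen.refl a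

lemma Reachable.symm (h : G.Reachable S a b) : G.Reachable S b a := Relation.EqvGen.symm _ _ h

lemma Reachable.trans (h₁ : G.Reachable S a b) (h₂ : G.Reachable S b c) : G.Reachable S a c :=
  Relation.EqvGen.trans _ _ _ h₁ h₂

lemma Reachable.mono (hST : S ⊆ T) (h : G.Reachable S a b) : G.Reachable T a b :=
  Relation.EqvGen.mono (fun _ _ ⟨f, hf, hab⟩ => ⟨f, hST hf, hab⟩) _ _ h

lemma reachable_of_mem (hf : f ∈ S) : G.Reachable S (G.src f) (G.tgt f) :=
  Relation.EqvGen.rel _ _ ⟨f, hf, .inl ⟨rfl, rfl⟩⟩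

lemma Reachable.of_forall_reachable (hT : ∀ f ∈ T, G.Reachable S (G.src f) (G.tgt f))
    (h : G.Reachable T a b) : G.Reachable S a b := by
  induction h with
  | rel x y hxy =>
    obtain ⟨f, hf, ⟨rfl, rfl⟩ | ⟨rfl, rfl⟩⟩ := hxy
    · exact hT f hf
    · exact (hT f hf).symm
  | refl => exact Reachable.refl _ _
  | symm _ _ _ ih => exact ih.symm
  | trans _ _ _ _ _ ih₁ ih₂ => exact ih₁.trans ih₂

lemma reachable_otail_ohead_iff :
    G.Reachable S (G.otail O f) (G.ohead O f) ↔ G.Reachable S (G.src f) (G.tgt f) := by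
  unfold otail ohead
  cases O f
  · exact ⟨Reachable.symm, Reachable.symm⟩
  · exact Iff.rfl

lemma Reachable.mem_iff {X : Set V} (hX : ∀ f ∈ S, ¬ G.crossing X f) (h : G.Reachable S a b) :
    a ∈ X ↔ b ∈ X := by
  induction h with
  | rel x y hxy =>
    obtain ⟨f, hf, ⟨rfl, rfl⟩ | ⟨rfl, rfl⟩⟩ := hxy <;>
    · have := hX f hf
      unfold crossing at this
      tauto
  | refl => rfl
  | symm _ _ _ ih => exact ih.symm
  | trans _ _ _ _ _ ih₁ ih₂ => exact ih₁.trans ih₂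

lemma not_crossing_component (hf : f ∈ S) : ¬ G.crossing (G.component S a) f := by
  have hsrc_tgt := reachable_of_mem (G := G) hf
  have : G.Reachable S a (G.src f) ↔ G.Reachable S a (G.tgt f) :=
    ⟨fun h => h.trans hsrc_tgt, fun h => h.trans hsrc_tgt.symm⟩
  unfold crossing component
  simp only [Set.mem_ofPred_eq]
  tauto

lemma Reachable.exists_mem_incident (O : E → Bool) (h : G.Reachable S a b) (hab : a ≠ b) :
    ∃ f ∈ S, G.otail O f = b ∨ G.ohead O f = b := by
  by_contra! hS
  refine hab ((h.mem_iff (X := {b}) fun f hf => ?_).mpr rfl)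
  have := hS f hf
  rw [crossing_iff_otail_mem_iff O, Set.mem_singleton_iff, Set.mem_singleton_iff]
  tauto

/-! ### Number of components -/

lemma quotMap_surjective (hST : S ⊆ T) :
    Function.Surjective
      (Quot.map id fun _ _ ⟨f, hf, hab⟩ => ⟨f, hST hf, hab⟩ :
        Quot (G.step S) → Quot (G.step T)) :=
  Quot.ind fun a => ⟨Quot.mk _ a, rfl⟩

lemma kappa_eq_of_reachable (hST : S ⊆ T) (h : ∀ f ∈ T, G.Reachable S (G.src f) (G.tgt f)) :
    G.kappa S = G.kappa T := by
  refine Nat.card_congr (Equiv.ofBijective _ ⟨fun x y => ?_, quotMap_surjective hST⟩)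
  induction x using Quot.ind
  induction y using Quot.ind
  intro hxy
  exact Quot.eq.mpr (Reachable.of_forall_reachable h (Quot.eq.mp hxy))

lemma kappa_lt_of_not_reachable [Finite V] (hST : S ⊆ T) (hf : f ∈ T)
    (h : ¬ G.Reachable S (G.src f) (G.tgt f)) : G.kappa T < G.kappa S := by
  by_contra! hle
  have hinj := ((quotMap_surjective (G := G) hST).bijective_of_nat_card_le hle).injective
  exact h (Quot.eq.mp (hinj (Quot.sound ⟨f, hf, .inl ⟨rfl, rfl⟩⟩)))

/-! ### Cuts and bridgeless edge sets -/

def IsBridgeless (G : OrGraph V E) (D : Set E) : Prop :=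
  ∀ g ∈ D, G.Reachable (D \ {g}) (G.src g) (G.tgt g)

lemma IsBridgeless.ncard_inter_ne_one {C D : Set E} (hD : G.IsBridgeless D) (hC : G.IsCut C) :
    (C ∩ D).ncard ≠ 1 := by
  intro h1
  obtain ⟨g, hg⟩ := Set.ncard_eq_one.mp h1
  have hgC : g ∈ C := (hg ▸ Set.mem_singleton g : g ∈ C ∩ D).1
  have hgD : g ∈ D := (hg ▸ Set.mem_singleton g : g ∈ C ∩ D).2
  have hDC : D \ {g} ⊆ Cᶜ :=
    fun f ⟨hfD, hfg⟩ hfC => hfg (hg ▸ ⟨hfC, hfD⟩ : f ∈ ({g} : Set E))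
  -- the ends of `g` are already joined through `D \ {g} ⊆ Cᶜ`
  have hκ : G.kappa Cᶜ = G.kappa (C \ {g})ᶜ := by
    refine kappa_eq_of_reachable (Set.compl_subset_compl.mpr Set.sdiff_subset) fun f hf => ?_
    by_cases hfC : f ∈ C
    · obtain rfl : f = g := by simpa [hfC] using hf
      exact (hD f hgD).mono hDC
    · exact reachable_of_mem hfC
  rcases (C \ {g}).eq_empty_or_nonempty with hempty | hne
  · rw [hempty, Set.compl_empty] at hκ
    exact hC.2.1.ne' hκ
  · exact hC.2.2 _ (Set.sdiff_singleton_ssubset.mpr hgC) hne (hκ ▸ hC.2.1)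

lemma exists_isCut_of_src_not_mem [Finite V] {X : Set V} {h : E} (hsrc : G.src h ∉ X)
    (htgt : G.tgt h ∈ X) :
    ∃ Y : Set V, G.IsCut {f | G.crossing Y f} ∧ G.crossing Y h ∧
      ∀ f, G.crossing Y f → G.crossing X f ∧ (G.src f ∈ Y ↔ G.src f ∈ X) := by
  set A := G.component {f | G.crossing X f}ᶜ (G.src h)
  set Y := G.component {f | G.crossing A f}ᶜ (G.tgt h)
  have hAX : ∀ v ∈ A, v ∉ X := fun v hv => (hv.mem_iff fun _ hf => hf).not.mp hsrc
  have hYA : ∀ v ∈ Y, v ∉ A := fun v hv => (hv.mem_iff fun _ hf => hf).not.mp (hAX _ · htgt)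
  have hAX' : ∀ f, G.crossing A f → G.crossing X f :=
    fun f hf => by_contra fun hX => not_crossing_component hX hf
  have hYA' : ∀ f, G.crossing Y f → G.crossing A f :=
    fun f hf => by_contra fun hA => not_crossing_component hA hf
  -- an edge leaving `Y` goes from `Y ∩ X` to `A ⊆ Xᶜ`
  have hends : ∀ f, G.crossing Y f →
      G.crossing X f ∧ (G.src f ∈ Y ↔ G.src f ∈ X) ∧ (G.src f ∈ Y ∨ G.src f ∈ A) ∧
        (G.tgt f ∈ Y ∨ G.tgt f ∈ A) := by
    intro f hf
    have hX := hAX' f (hYA' f hf)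
    refine ⟨hX, ?_⟩
    have hA := hYA' f hf
    have := hYA (G.src f); have := hYA (G.tgt f); have := hAX (G.src f); have := hAX (G.tgt f)
    unfold crossing at hf hA hX
    tauto
  have hsY : G.src h ∉ Y := fun hs => hYA _ hs (Reachable.refl _ _)
  have htY : G.tgt h ∈ Y := Reachable.refl _ _
  have hhY : G.crossing Y h := by
    unfold crossing
    tauto
  refine ⟨Y, ⟨⟨h, hhY⟩, ?_, fun C' hC' _ hlt => ?_⟩, hhY,
    fun f hf => ⟨(hends f hf).1, (hends f hf).2.1⟩⟩
  · exact kappa_lt_of_not_reachable (Set.subset_univ _) (Set.mem_univ h) fun hr =>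
      hsY ((hr.mem_iff fun _ hf => hf).mpr htY)
  · obtain ⟨g, hgY, hgC'⟩ := Set.exists_of_ssubset hC'
    have hC'A : {f | G.crossing A f}ᶜ ⊆ C'ᶜ := fun f hf hfC' => hf (hYA' f (hC'.1 hfC'))
    have hC'X : {f | G.crossing X f}ᶜ ⊆ C'ᶜ :=
      fun f hf hfC' => hf (hAX' f (hYA' f (hC'.1 hfC')))
    -- `Y ∪ A`, which contains both ends of every edge of `C'`, stays connected through `g`
    set R := G.component C'ᶜ (G.tgt h)
    have hYR : Y ⊆ R := fun v hv => hv.mono hC'A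
    obtain ⟨w, hwA, hwR⟩ : ∃ w ∈ A, w ∈ R := by
      have hgR : ¬ G.crossing R g := not_crossing_component (show g ∈ C'ᶜ from hgC')
      obtain ⟨-, -, hs, ht⟩ := hends g hgY
      have := @hYR (G.src g); have := @hYR (G.tgt g)
      have hgY' : G.crossing Y g := hgY
      unfold crossing at hgY' hgR
      by_cases hgs : G.src g ∈ Y
      · exact ⟨G.tgt g, by tauto, by tauto⟩
      · exact ⟨G.src g, by tauto, by tauto⟩
    have hAR : A ⊆ R := fun v hv =>
      Reachable.trans hwR ((Reachable.trans (Reachable.symm hwA) hv).mono hC'X)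
    refine hlt.ne' (kappa_eq_of_reachable (Set.subset_univ _) fun f _ => ?_)
    by_cases hf : f ∈ C'
    · obtain ⟨-, -, hs, ht⟩ := hends f (hC'.1 hf)
      have hsR : G.src f ∈ R := hs.elim (hYR ·) (hAR ·)
      have htR : G.tgt f ∈ R := ht.elim (hYR ·) (hAR ·)
      exact Reachable.trans (Reachable.symm hsR) htR
    · exact reachable_of_mem hf

lemma exists_isCut_of_crossing [Finite V] {X : Set V} {h : E} (hh : G.crossing X h) :
    ∃ Y : Set V, G.IsCut {f | G.crossing Y f} ∧ G.crossing Y h ∧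
      ∀ f, G.crossing Y f → G.crossing X f ∧ (G.src f ∈ Y ↔ G.src f ∈ X) := by
  by_cases hsrc : G.src h ∈ X
  · obtain ⟨Y, hY, hhY, hends⟩ := exists_isCut_of_src_not_mem (X := Xᶜ) (not_not.mpr hsrc)
      (hh.mp hsrc)
    refine ⟨Yᶜ, by simpa only [crossing_compl] using hY, crossing_compl.mpr hhY,
      fun f hf => ?_⟩
    obtain ⟨hfX, hsrcf⟩ := hends f (crossing_compl.mp hf)
    rw [Set.mem_compl_iff] at hsrcf ⊢
    exact ⟨crossing_compl.mp hfX, by tauto⟩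
  · exact exists_isCut_of_src_not_mem hsrc (not_not.mp (hsrc ∘ hh.mpr))

lemma isBridgeless_of_forall_isCut [Finite V] {D : Set E}
    (hD : ∀ C, G.IsCut C → (C ∩ D).ncard ≠ 1) : G.IsBridgeless D := by
  intro g hgD
  by_contra hg
  -- the component of `src g` in `D \ {g}` is left by `g` alone among the edges of `D`
  set X := G.component (D \ {g}) (G.src g)
  have hgX : G.crossing X g := (iff_true_right hg).mpr (Reachable.refl _ _)
  obtain ⟨Y, hY, hgY, hends⟩ := exists_isCut_of_crossing hgX
  refine hD _ hY (Set.ncard_eq_one.mpr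
    ⟨g, Set.eq_singleton_iff_unique_mem.mpr ⟨⟨hgY, hgD⟩, ?_⟩⟩)
  rintro f ⟨hfY, hfD⟩
  by_contra hfg
  exact not_crossing_component (show f ∈ D \ {g} from ⟨hfD, hfg⟩) (hends f hfY).1

lemma isCycle_iff [Finite V] {D : Set E} :
    G.IsCycle D ↔
      D.Nonempty ∧ G.IsBridgeless D ∧ ∀ D' ⊂ D, D'.Nonempty → ¬ G.IsBridgeless D' := by
  have key : ∀ D : Set E, G.IsBridgeless D ↔ ∀ C, G.IsCut C → (C ∩ D).ncard ≠ 1 :=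
    fun _ => ⟨fun hD _ hC => hD.ncard_inter_ne_one hC, isBridgeless_of_forall_isCut⟩
  simp only [IsCycle, key]

/-! ### Balanced edge sets -/

def IsBalanced (G : OrGraph V E) (O : E → Bool) (D : Set E) : Prop :=
  ∀ v, {f ∈ D | G.ohead O f = v}.ncard = {f ∈ D | G.otail O f = v}.ncard

lemma IsBalanced.ncard_ohead_mem [Finite V] [Finite E] {D : Set E} (hD : G.IsBalanced O D)
    (U : Set V) : {f ∈ D | G.ohead O f ∈ U}.ncard = {f ∈ D | G.otail O f ∈ U}.ncard := by
  have := Fintype.ofFinite V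
  rw [Set.ncard_sep_mem_eq_sum, Set.ncard_sep_mem_eq_sum]
  exact Finset.sum_congr rfl fun v _ => hD v

lemma IsBalanced.otail_mem_of_ohead_mem [Finite V] [Finite E] {D : Set E} (hD : G.IsBalanced O D)
    {U : Set V} (hU : ∀ f ∈ D, G.otail O f ∈ U → G.ohead O f ∈ U) {f : E} (hf : f ∈ D)
    (hhead : G.ohead O f ∈ U) : G.otail O f ∈ U := by
  have hsub : {f ∈ D | G.otail O f ∈ U} ⊆ {f ∈ D | G.ohead O f ∈ U} :=
    fun f ⟨hf, htail⟩ => ⟨hf, hU f hf htail⟩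
  have heq := Set.eq_of_subset_of_ncard_le hsub (hD.ncard_ohead_mem U).le
  exact (heq ▸ ⟨hf, hhead⟩ : f ∈ {f ∈ D | G.otail O f ∈ U}).2

lemma IsBalanced.isBridgeless [Finite V] [Finite E] {D : Set E} (hD : G.IsBalanced O D) :
    G.IsBridgeless D := by
  intro h hh
  rw [← reachable_otail_ohead_iff (O := O)]
  by_contra hn
  set R := G.component (D \ {h}) (G.ohead O h)
  refine hn (Reachable.symm (hD.otail_mem_of_ohead_mem (U := R) (fun f hf hfR => ?_) hh
    (Reachable.refl _ _)))
  have hfh : f ≠ h := by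
    rintro rfl
    exact hn (Reachable.symm hfR)
  have hfR' : ¬ G.crossing R f := not_crossing_component (show f ∈ D \ {h} from ⟨hf, hfh⟩)
  exact (otail_mem_iff_of_not_crossing hfR').mp hfR

lemma IsDirCut.disjoint_of_isBalanced [Finite V] [Finite E] {C D : Set E}
    (hC : G.IsDirCut O C) (hD : G.IsBalanced O D) : Disjoint C D := by
  obtain ⟨-, U, hCU, htail⟩ := hC
  refine Set.disjoint_left.mpr fun e heC heD => ?_
  have hcross := (crossing_iff_otail_mem_iff O).mp ((hCU e).mp heC)
  -- no edge of `D` enters `U`, since every edge of the cut leaves `U`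
  have hout : ∀ f ∈ D, G.otail O f ∈ Uᶜ → G.ohead O f ∈ Uᶜ := fun f _ hft hfh =>
    hft (htail f ((hCU f).mpr ((crossing_iff_otail_mem_iff O).mpr (iff_of_false hft (· hfh)))))
  exact hD.otail_mem_of_ohead_mem hout heD (hcross.mp (htail e heC)) (htail e heC)

/-! ### Vertex-disjoint unions of directed cycles -/

/-- Every vertex has in-degree and out-degree in `D` both equal to `0` or both equal to `1`. -/
def IsDisjointDirCycles (G : OrGraph V E) (O : E → Bool) (D : Set E) : Prop :=
  Set.InjOn (G.ohead O) D ∧ Set.InjOn (G.otail O) D ∧ G.ohead O '' D = G.otail O '' D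

lemma IsDisjointDirCycles.isBalanced {D : Set E} (hD : G.IsDisjointDirCycles O D) :
    G.IsBalanced O D := by
  intro v
  have key : ∀ φ : E → V, Set.InjOn φ D →
      {f ∈ D | φ f = v}.ncard = (φ '' D ∩ {v}).ncard := by
    intro φ hφ
    rw [← (hφ.mono (Set.sep_subset D _)).ncard_image]
    congr 1
    ext w
    simp only [Set.mem_image, Set.mem_inter_iff, Set.mem_singleton_iff, Set.mem_ofPred_eq]
    constructor
    · rintro ⟨f, ⟨hf, rfl⟩, rfl⟩; exact ⟨⟨f, hf, rfl⟩, rfl⟩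
    · rintro ⟨⟨f, hf, rfl⟩, rfl⟩; exact ⟨f, ⟨hf, rfl⟩, rfl⟩
  rw [key _ hD.1, key _ hD.2.1, hD.2.2]

lemma IsDisjointDirCycles.reverse {D : Set E} (hD : G.IsDisjointDirCycles O D) :
    G.IsDisjointDirCycles (fun f => !O f) D := by
  rw [IsDisjointDirCycles, ohead_not, otail_not]
  exact ⟨hD.2.1, hD.1, hD.2.2.symm⟩

lemma IsDisjointDirCycles.image_ohead_subset_of_isBridgeless {D D' : Set E}
    (hD : G.IsDisjointDirCycles O D) (hD'D : D' ⊆ D) (hD' : G.IsBridgeless D') :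
    G.ohead O '' D' ⊆ G.otail O '' D' := by
  rintro _ ⟨f, hf, rfl⟩
  obtain ⟨g, hg, hgf⟩ : G.ohead O f ∈ G.otail O '' D :=
    hD.2.2 ▸ Set.mem_image_of_mem _ (hD'D hf)
  -- `g` is the successor of `f` on its cycle; it is the only edge of `D` leaving the head of `f`
  refine ⟨g, ?_, hgf⟩
  by_cases hloop : G.otail O f = G.ohead O f
  · rwa [hD.2.1 (hD'D hf) hg (hloop.trans hgf.symm)] at hf
  obtain ⟨k, ⟨hkD', hkf⟩, hk⟩ := ((reachable_otail_ohead_iff (O := O)).mpr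
    (hD' f hf)).exists_mem_incident O hloop
  rcases hk with hk | hk
  · rwa [← hD.2.1 (hD'D hkD') hg (hk.trans hgf.symm)]
  · exact absurd (hD.1 (hD'D hkD') (hD'D hf) hk) hkf

lemma IsDisjointDirCycles.of_isBridgeless_subset {D D' : Set E} (hD : G.IsDisjointDirCycles O D)
    (hD'D : D' ⊆ D) (hD' : G.IsBridgeless D') : G.IsDisjointDirCycles O D' := by
  refine ⟨hD.1.mono hD'D, hD.2.1.mono hD'D,
    (hD.image_ohead_subset_of_isBridgeless hD'D hD').antisymm ?_⟩
  simpa only [ohead_not, otail_not] using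
    hD.reverse.image_ohead_subset_of_isBridgeless hD'D hD'

lemma IsDisjointDirCycles.sdiff {D D' : Set E} (hD : G.IsDisjointDirCycles O D)
    (hD' : G.IsDisjointDirCycles O D') (hD'D : D' ⊆ D) : G.IsDisjointDirCycles O (D \ D') :=
  ⟨hD.1.mono Set.sdiff_subset, hD.2.1.mono Set.sdiff_subset, by
    rw [hD.1.image_sdiff_subset hD'D, hD.2.1.image_sdiff_subset hD'D, hD.2.2, hD'.2.2]⟩

lemma isDirCycle_of_minimal [Finite V] [Finite E] {e : E} {D : Set E}
    (hmin : Minimal (fun D => e ∈ D ∧ G.IsDisjointDirCycles O D) D) : G.IsDirCycle O D := by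
  obtain ⟨⟨heD, hD⟩, hmin⟩ := hmin
  have hbal := hD.isBalanced
  refine ⟨isCycle_iff.mpr
    ⟨⟨e, heD⟩, hbal.isBridgeless, fun D' hD'D ⟨f, hf⟩ hD' => ?_⟩, hbal⟩
  -- both `D'` and `D \ D'` would be smaller unions of directed cycles, one of them through `e`
  have h₁ := hD.of_isBridgeless_subset hD'D.1 hD'
  by_cases he : e ∈ D'
  · exact hD'D.2 (hmin ⟨he, h₁⟩ hD'D.1)
  · have hsub : D ⊆ D \ D' :=
      @hmin (D \ D') ⟨⟨heD, he⟩, hD.sdiff h₁ hD'D.1⟩ Set.sdiff_subset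
    exact (hsub (hD'D.1 hf)).2 hf

/-! ### Directed walks -/

def DirAdj (G : OrGraph V E) (O : E → Bool) (a b : V) : Prop :=
  ∃ f, G.otail O f = a ∧ G.ohead O f = b

def IsDirWalk (G : OrGraph V E) (O : E → Bool) : V → List E → V → Prop
  | a, [], b => a = b
  | a, f :: l, b => G.otail O f = a ∧ G.IsDirWalk O (G.ohead O f) l b

lemma IsDirWalk.map_otail_append {l : List E} (h : G.IsDirWalk O a l b) :
    l.map (G.otail O) ++ [b] = a :: l.map (G.ohead O) := by
  induction l generalizing a with
  | nil => exact congrArg ([·]) h.symm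
  | cons f l ih =>
    obtain ⟨rfl, h⟩ := h
    simp [ih h]

lemma IsDirWalk.exists_suffix {l : List E} (h : G.IsDirWalk O a l b)
    (hc : c ∈ a :: l.map (G.ohead O)) :
    ∃ l', G.IsDirWalk O c l' b ∧
      (c :: l'.map (G.ohead O)).Sublist (a :: l.map (G.ohead O)) := by
  induction l generalizing a with
  | nil =>
    obtain rfl : c = a := List.mem_singleton.mp hc
    exact ⟨[], h, .refl _⟩
  | cons f l ih =>
    rcases List.mem_cons.mp hc with rfl | hc
    · exact ⟨f :: l, h, .refl _⟩
    · obtain ⟨l', hl', hsub⟩ := ih h.2 hc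
      exact ⟨l', hl', hsub.cons _⟩

lemma exists_isDirWalk_nodup (h : Relation.ReflTransGen (G.DirAdj O) a b) :
    ∃ l, G.IsDirWalk O a l b ∧ (a :: l.map (G.ohead O)).Nodup := by
  induction h using Relation.ReflTransGen.head_induction_on with
  | refl => exact ⟨[], rfl, List.nodup_singleton _⟩
  | head hac _ ih =>
    obtain ⟨f, rfl, rfl⟩ := hac
    obtain ⟨l, hl, hnd⟩ := ih
    by_cases hrep : G.otail O f ∈ G.ohead O f :: l.map (G.ohead O)
    · obtain ⟨l', hl', hsub⟩ := hl.exists_suffix hrep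
      exact ⟨l', hl', hsub.nodup hnd⟩
    · exact ⟨f :: l, ⟨rfl, hl⟩, List.nodup_cons.mpr ⟨hrep, hnd⟩⟩

lemma exists_isDisjointDirCycles_of_reflTransGen {e : E}
    (h : Relation.ReflTransGen (G.DirAdj O) (G.ohead O e) (G.otail O e)) :
    ∃ D, e ∈ D ∧ G.IsDisjointDirCycles O D := by
  obtain ⟨l, hl, hnd⟩ := exists_isDirWalk_nodup h
  rw [← List.map_cons] at hnd
  have hperm : ((e :: l).map (G.ohead O)).Perm ((e :: l).map (G.otail O)) := by
    rw [List.map_cons (l := l), List.map_cons, ← hl.map_otail_append]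
    exact List.perm_append_singleton _ _
  refine ⟨{f | f ∈ e :: l}, List.mem_cons_self,
    fun _ hf _ hg => List.inj_on_of_nodup_map hnd hf hg,
    fun _ hf _ hg => List.inj_on_of_nodup_map (hperm.nodup_iff.mp hnd) hf hg, ?_⟩
  ext v
  simpa [eq_comm] using hperm.mem_iff (a := v)

lemma exists_isDirCycle_of_reflTransGen [Finite V] [Finite E] {e : E}
    (h : Relation.ReflTransGen (G.DirAdj O) (G.ohead O e) (G.otail O e)) :
    ∃ D, G.IsDirCycle O D ∧ e ∈ D := by
  obtain ⟨D, hD⟩ :=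
    exists_minimal_of_wellFoundedLT _ (exists_isDisjointDirCycles_of_reflTransGen h)
  exact ⟨D, isDirCycle_of_minimal hD, hD.prop.1⟩

lemma exists_isDirCut_of_not_reflTransGen [Finite V] {e : E}
    (h : ¬ Relation.ReflTransGen (G.DirAdj O) (G.ohead O e) (G.otail O e)) :
    ∃ C, G.IsDirCut O C ∧ e ∈ C := by
  set U := {v | Relation.ReflTransGen (G.DirAdj O) (G.ohead O e) v}
  have hU : ∀ f, G.otail O f ∈ U → G.ohead O f ∈ U := fun f hf => hf.tail ⟨f, rfl, rfl⟩
  -- every edge between `U` and `Uᶜ` enters `U`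
  have htail : ∀ f, G.crossing Uᶜ f → G.otail O f ∈ Uᶜ := fun f hf hfU =>
    ((crossing_iff_otail_mem_iff O).mp (crossing_compl.mp hf)).mp hfU (hU f hfU)
  have he : G.crossing Uᶜ e := crossing_compl.mpr
    ((crossing_iff_otail_mem_iff O).mpr (iff_of_false h (not_not.mpr .refl)))
  obtain ⟨Y, hY, heY, hends⟩ := exists_isCut_of_crossing he
  refine ⟨{f | G.crossing Y f}, ⟨hY, Y, fun _ => Iff.rfl, fun f hf => ?_⟩, heY⟩
  obtain ⟨hfU, hsrc⟩ := hends f hf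
  have hft := htail f hfU
  have hf' : G.crossing Y f := hf
  unfold crossing at hf' hfU
  unfold otail at hft ⊢
  split_ifs at hft ⊢ <;> tauto

end OrGraph

/-- an edge belongs to a directed cut of an orientation `O` iff it
does not belong to a directed cycle of `O`; in particular these edge sets
partition `E(G)`. -/
theorem mem_dirCut_iff_not_mem_dirCycle {V E : Type} [Fintype V] [Fintype E]
    (G : OrGraph V E) (O : E → Bool) (e : E) :
    (∃ C : Set E, G.IsDirCut O C ∧ e ∈ C) ↔ ¬ (∃ C : Set E, G.IsDirCycle O C ∧ e ∈ C) := by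
  refine ⟨fun ⟨C, hC, heC⟩ ⟨D, hD, heD⟩ =>
    Set.disjoint_left.mp (hC.disjoint_of_isBalanced hD.2) heC heD, fun hno => ?_⟩
  by_cases h : Relation.ReflTransGen (G.DirAdj O) (G.ohead O e) (G.otail O e)
  · exact absurd (OrGraph.exists_isDirCycle_of_reflTransGen h) hno
  · exact OrGraph.exists_isDirCut_of_not_reflTransGen h
end

section
/- Let G be a graph with a total order on its edge set, and let S, T be spanning subgraphs (edge subsets) of G such that S minus (Î(S) ∪ L̂(S)) ⊆ T ⊆ S ∪ Î(S) ∪ L̂(S). Then Î(S) = Î(T) and L̂(S) = L̂(T). -/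
open scoped Classical

/-- A multigraph with a fixed reference orientation: each edge `e` has a
source `src e` and a target `tgt e` (the positive direction `e⁺ = (src e, tgt e)`). -/
structure MGraph (V E : Type) where
  src : E → V
  tgt : E → V

namespace MGraph

variable {V E : Type} (G : MGraph V E)

/-- Two vertices are joined by some edge of `S`. -/
def step (S : Set E) (a b : V) : Prop :=
  ∃ e ∈ S, (G.src e = a ∧ G.tgt e = b) ∨ (G.src e = b ∧ G.tgt e = a)

/-- `κ(S)`: the number of connected components of the spanning subgraph `(V, S)`. -/
noncomputable def kappa (S : Set E) : ℕ :=
  Nat.card (Quot (G.step S))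

/-- A cut of `G`: a minimal nonempty edge set whose removal increases the
number of connected components. -/
def IsCut (C : Set E) : Prop :=
  C.Nonempty ∧ G.kappa Cᶜ > G.kappa Set.univ ∧
    ∀ C' : Set E, C' ⊂ C → C'.Nonempty → ¬ (G.kappa C'ᶜ > G.kappa Set.univ)

/-- A cycle of `G`: a minimal nonempty edge set meeting no cut of `G` in
precisely one element. -/
def IsCycle (C : Set E) : Prop :=
  C.Nonempty ∧ (∀ Cu : Set E, G.IsCut Cu → (Cu ∩ C).ncard ≠ 1) ∧
    ∀ C' : Set E, C' ⊂ C → C'.Nonempty →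
      ¬ (∀ Cu : Set E, G.IsCut Cu → (Cu ∩ C').ncard ≠ 1)

/-- Head of edge `e` under orientation `O` (`O e = true` means the reference
direction `src e → tgt e`). -/
def ohead (O : E → Bool) (e : E) : V := if O e then G.tgt e else G.src e

/-- Tail of edge `e` under orientation `O`. -/
def otail (O : E → Bool) (e : E) : V := if O e then G.src e else G.tgt e

/-- Edge `e` crosses the vertex set `U` (exactly one endpoint in `U`). -/
def crossing (U : Set V) (e : E) : Prop := G.src e ∈ U ↔ G.tgt e ∉ U

/-- A directed cut of the orientation `O`: a cut all of whose edges are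
oriented consistently out of some vertex set `U`. -/
def IsDirCut (O : E → Bool) (C : Set E) : Prop :=
  G.IsCut C ∧ ∃ U : Set V, (∀ e, e ∈ C ↔ G.crossing U e) ∧ ∀ e ∈ C, G.otail O e ∈ U

/-- A directed cycle of the orientation `O`: a cycle oriented consistently,
i.e. in-degree equals out-degree at each vertex within the cycle. -/
def IsDirCycle (O : E → Bool) (C : Set E) : Prop :=
  G.IsCycle C ∧ ∀ v : V,
    {e ∈ C | G.ohead O e = v}.ncard = {e ∈ C | G.otail O e = v}.ncard

section Activities

variable [LinearOrder E]

/-- `Î(S)`: cut active edges of the spanning subgraph `S`. -/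
def Iact (S : Set E) : Set E :=
  {e | ∃ C : Set E, G.IsCut C ∧ e ∈ C ∧ (∀ f ∈ C, f ≠ e → f ∉ S) ∧ ∀ f ∈ C, e ≤ f}

/-- `L̂(S)`: cycle active edges of the spanning subgraph `S`. -/
def Lact (S : Set E) : Set E :=
  {e | ∃ C : Set E, G.IsCycle C ∧ e ∈ C ∧ (∀ f ∈ C, f = e ∨ f ∈ S) ∧ ∀ f ∈ C, e ≤ f}

/-- `I(O)`: cut active edges of the orientation `O`. -/
def Ior (O : E → Bool) : Set E :=
  {e | ∃ C : Set E, G.IsDirCut O C ∧ e ∈ C ∧ ∀ f ∈ C, e ≤ f}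

/-- `L(O)`: cycle active edges of the orientation `O`. -/
def Lor (O : E → Bool) : Set E :=
  {e | ∃ C : Set E, G.IsDirCycle O C ∧ e ∈ C ∧ ∀ f ∈ C, e ≤ f}

end Activities

/-- The Tutte polynomial via the corank-nullity expansion, evaluated in a
commutative ring. -/
noncomputable def tutte [Fintype V] [Fintype E] (R : Type) [CommRing R] (x y : R) : R :=
  ∑ S : Finset E, (x - 1) ^ (G.kappa ↑S - G.kappa Set.univ) *
    (y - 1) ^ (S.card + G.kappa ↑S - Fintype.card V)

/-! ### Fourientations.
A fourientation is `F : E → Bool × Bool`, recording whether `e⁺` resp. `e⁻`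
belongs to the fourientation. -/

/-- A potential cut of the fourientation `F`: a directed cut each of whose
edges is unoriented in `F` or oriented in the cut direction (out of `U`). -/
def PotCut (F : E → Bool × Bool) (C : Set E) : Prop :=
  G.IsCut C ∧ ∃ U : Set V, (∀ e, e ∈ C ↔ G.crossing U e) ∧
    ∀ e ∈ C, (G.src e ∈ U → (F e).2 = false) ∧ (G.src e ∉ U → (F e).1 = false)

/-- A potential cycle of the fourientation `F`, with cyclic direction `dir`:
a consistently directed cycle each of whose edges has its `dir`-direction
present in `F` (so each edge is bioriented or oriented in the cycle direction). -/
def PotCycle (F : E → Bool × Bool) (C : Set E) (dir : E → Bool) : Prop :=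
  G.IsCycle C ∧
    (∀ v : V, {e ∈ C | G.ohead dir e = v}.ncard = {e ∈ C | G.otail dir e = v}.ncard) ∧
    ∀ e ∈ C, (if dir e then (F e).1 else (F e).2) = true

/-- Add the direction `d` of edge `e` to the fourientation `F`. -/
def addDir [DecidableEq E] (F : E → Bool × Bool) (e : E) (d : Bool) : E → Bool × Bool :=
  Function.update F e (if d then (true, (F e).2) else ((F e).1, true))

/-- Remove the direction `d` of edge `e` from the fourientation `F`. -/
def remDir [DecidableEq E] (F : E → Bool × Bool) (e : E) (d : Bool) : E → Bool × Bool :=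
  Function.update F e (if d then (false, (F e).2) else ((F e).1, false))

/-- `ᵉO`: toggle the status of the edge `e` in the fourientation `F`. -/
def toggle [DecidableEq E] (F : E → Bool × Bool) (e : E) : E → Bool × Bool :=
  Function.update F e ((F e).2, (F e).1)

section FourActivities

variable [LinearOrder E]

/-- `I^o(O)`: oriented edges that are minimal in some potential cut. -/
def Io (F : E → Bool × Bool) : Set E :=
  {f | (F f).1 ≠ (F f).2 ∧ ∃ C : Set E, G.PotCut F C ∧ f ∈ C ∧ ∀ g ∈ C, f ≤ g}

/-- `L^o(O)`: oriented edges that are minimal in some potential cycle. -/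
def Lo (F : E → Bool × Bool) : Set E :=
  {f | (F f).1 ≠ (F f).2 ∧
    ∃ (C : Set E) (dir : E → Bool), G.PotCycle F C dir ∧ f ∈ C ∧ ∀ g ∈ C, f ≤ g}

/-- `I^u(O)`: unoriented edges `f` minimal in some potential cut of
`O ∪ {f^{σᵤ(f)}}`. -/
def Iu (σu : E → Bool) (F : E → Bool × Bool) : Set E :=
  {f | F f = (false, false) ∧
    ∃ C : Set E, G.PotCut (addDir F f (σu f)) C ∧ f ∈ C ∧ ∀ g ∈ C, f ≤ g}

/-- `L^b(O)`: bioriented edges `f` minimal in some potential cycle of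
`O \ {f^{σ_b(f)}}`. -/
def Lb (σb : E → Bool) (F : E → Bool × Bool) : Set E :=
  {f | F f = (true, true) ∧
    ∃ (C : Set E) (dir : E → Bool),
      G.PotCycle (remDir F f (σb f)) C dir ∧ f ∈ C ∧ ∀ g ∈ C, f ≤ g}

end FourActivities

/-- The deletion `G − e`. -/
def del (e : E) : MGraph V {f : E // f ≠ e} :=
  ⟨fun f => G.src f.1, fun f => G.tgt f.1⟩

/-- The contraction `G/e`: identify the endpoints of `e` and remove `e`. -/
def contr (e : E) : MGraph (Quot (fun a b => a = G.src e ∧ b = G.tgt e)) {f : E // f ≠ e} :=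
  ⟨fun f => Quot.mk _ (G.src f.1), fun f => Quot.mk _ (G.tgt f.1)⟩

/-! ### Potential walks in a fourientation. A walk step is a pair `(e, d)` of an
edge and a chosen direction (`d = true` for the reference direction). -/

/-- Tail of the directed edge `(e, d)`. -/
def ftail (p : E × Bool) : V := if p.2 then G.src p.1 else G.tgt p.1

/-- Head of the directed edge `(e, d)`. -/
def fhead (p : E × Bool) : V := if p.2 then G.tgt p.1 else G.src p.1

/-- The direction `d` of `e` is present in the fourientation `F`. -/
def present (F : E → Bool × Bool) (p : E × Bool) : Prop :=
  (if p.2 then (F p.1).1 else (F p.1).2) = true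

/-- A potential walk of the fourientation `F` from `a` to `b`: each step uses
a direction present in `F` (so each edge is bioriented or oriented
consistently with the walk). -/
def IsPWalk (F : E → Bool × Bool) : V → List (E × Bool) → V → Prop
  | a, [], b => a = b
  | a, p :: rest, b => G.ftail p = a ∧ present F p ∧ IsPWalk F (G.fhead p) rest b

/-- A potential path: a potential walk visiting pairwise distinct vertices. -/
def IsPPath (F : E → Bool × Bool) (a : V) (w : List (E × Bool)) (b : V) : Prop :=
  G.IsPWalk F a w b ∧ (a :: w.map G.fhead).Nodup

end MGraph

/-!
Both activities are conditions on connectivity: `e ∈ L̂(S)` iff the ends of `e` are joined by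
edges of `S` above `e`, and `e ∈ Î(S)` iff they are not joined by edges below `e` together with
edges of `S` above `e`. Changing `S` at one active edge `f₀` can only affect these conditions for
`e < f₀`, and there `f₀` is irrelevant: if `f₀` is cycle active, its ends are already joined
without it; if it is cut active, `f₀` could only help to join the ends of `e` if `e` helped to
join the ends of `f₀` (exchange), which its activity forbids. Changing the edges where `S` and
`T` differ one at a time gives the theorem.
-/

namespace MGraph

variable {V E : Type}

def Conn (G : MGraph V E) (X : Set E) : V → V → Prop :=
  Relation.EqvGen (G.step X)

def cutSet (G : MGraph V E) (U : Set V) : Set E :=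
  {e | G.crossing U e}

def Cyclic (G : MGraph V E) (B : Set E) : Prop :=
  ∀ g ∈ B, G.Conn (B \ {g}) (G.src g) (G.tgt g)

variable {G : MGraph V E} {X Y : Set E} {a b : V}

@[simp]
theorem mem_cutSet {U : Set V} {e : E} : e ∈ G.cutSet U ↔ (G.src e ∈ U ↔ G.tgt e ∉ U) :=
  Iff.rfl

namespace Conn

theorem refl (a : V) : G.Conn X a a := Relation.EqvGen.refl a

theorem symm (h : G.Conn X a b) : G.Conn X b a := Relation.EqvGen.symm _ _ h

theorem trans {c : V} (h₁ : G.Conn X a b) (h₂ : G.Conn X b c) : G.Conn X a c :=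
  Relation.EqvGen.trans _ _ _ h₁ h₂

theorem of_mem {e : E} (he : e ∈ X) : G.Conn X (G.src e) (G.tgt e) :=
  Relation.EqvGen.rel _ _ ⟨e, he, Or.inl ⟨rfl, rfl⟩⟩

theorem mono (hXY : X ⊆ Y) (h : G.Conn X a b) : G.Conn Y a b :=
  Relation.EqvGen.mono (fun _ _ ⟨e, he, hends⟩ => ⟨e, hXY he, hends⟩) _ _ h

theorem mem_iff {U : Set V} (hU : ∀ e ∈ X, e ∉ G.cutSet U) (h : G.Conn X a b) :
    a ∈ U ↔ b ∈ U := by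
  induction h with
  | rel a b hab =>
    obtain ⟨e, he, hends⟩ := hab
    have := hU e he
    rw [mem_cutSet] at this
    rcases hends with ⟨rfl, rfl⟩ | ⟨rfl, rfl⟩ <;> tauto
  | refl => rfl
  | symm _ _ _ ih => exact ih.symm
  | trans _ _ _ _ _ ih₁ ih₂ => exact ih₁.trans ih₂

end Conn

theorem notMem_cutSet_component_of_conn {e : E} (he : G.Conn X (G.src e) (G.tgt e)) :
    e ∉ G.cutSet {v | G.Conn X a v} := by
  have : G.Conn X a (G.src e) ↔ G.Conn X a (G.tgt e) :=
    ⟨fun h => h.trans he, fun h => h.trans he.symm⟩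
  simp only [mem_cutSet, Set.mem_ofPred_eq]
  tauto

theorem notMem_cutSet_component {e : E} (he : e ∈ X) : e ∉ G.cutSet {v | G.Conn X a v} :=
  notMem_cutSet_component_of_conn (Conn.of_mem he)

theorem Conn.of_insert_of_conn {f : E} (hf : G.Conn X (G.src f) (G.tgt f))
    (h : G.Conn (insert f X) a b) : G.Conn X a b := by
  refine (Conn.mem_iff (U := {v | G.Conn X a v}) ?_ h).mp (Conn.refl a)
  rintro e (rfl | he)
  · exact notMem_cutSet_component_of_conn hf
  · exact notMem_cutSet_component he

theorem Conn.exchange {e f : E} (h : G.Conn (insert f X) (G.src e) (G.tgt e))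
    (hne : ¬ G.Conn X (G.src e) (G.tgt e)) : G.Conn (insert e X) (G.src f) (G.tgt f) := by
  set K := {v | G.Conn X (G.src e) v}
  set K' := {v | G.Conn X (G.tgt e) v}
  have hK : f ∈ G.cutSet K := by
    by_contra hf
    refine hne ((Conn.mem_iff (U := K) ?_ h).mp (Conn.refl _))
    rintro g (rfl | hg)
    · exact hf
    · exact notMem_cutSet_component hg
  have hK' : f ∈ G.cutSet K' := by
    by_contra hf
    refine hne ((Conn.mem_iff (U := K') ?_ h.symm).mp (Conn.refl _)).symm
    rintro g (rfl | hg)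
    · exact hf
    · exact notMem_cutSet_component hg
  have hdisj : ∀ v, v ∈ K → v ∉ K' := fun v hv hv' => hne (hv.trans hv'.symm)
  have hee : G.Conn (insert e X) (G.src e) (G.tgt e) := Conn.of_mem (Set.mem_insert e X)
  simp only [mem_cutSet] at hK hK'
  by_cases hs : G.Conn X (G.src e) (G.src f)
  · have ht : G.Conn X (G.tgt e) (G.tgt f) := by
      by_contra ht
      exact hdisj _ hs (hK'.mpr ht)
    exact ((hs.mono (Set.subset_insert e X)).symm.trans hee).trans
      (ht.mono (Set.subset_insert e X))
  · have ht : G.Conn X (G.src e) (G.tgt f) := by tauto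
    have hs' : G.Conn X (G.tgt e) (G.src f) := by tauto
    exact ((hs'.mono (Set.subset_insert e X)).symm.trans hee.symm).trans
      (ht.mono (Set.subset_insert e X))

theorem cutSet_symmDiff (U W : Set V) :
    G.cutSet (symmDiff U W) = symmDiff (G.cutSet U) (G.cutSet W) := by
  ext e
  simp only [mem_cutSet, Set.mem_symmDiff]
  tauto

theorem kappa_lt_kappa_iff [Finite V] (hXY : X ⊆ Y) :
    G.kappa Y < G.kappa X ↔ ∃ a b, G.Conn Y a b ∧ ¬ G.Conn X a b := by
  let π : Quot (G.step X) → Quot (G.step Y) :=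
    Quot.map id fun _ _ ⟨e, he, hends⟩ => ⟨e, hXY he, hends⟩
  have hπ : Function.Surjective π := Quot.ind fun a => ⟨Quot.mk _ a, rfl⟩
  have hcard : G.kappa Y ≤ G.kappa X := Nat.card_le_card_of_surjective π hπ
  have hinj : Function.Injective π ↔ G.kappa X = G.kappa Y :=
    ⟨fun h => (Nat.bijective_iff_surjective_and_card π).mp ⟨h, hπ⟩ |>.2,
      fun h => ((Nat.bijective_iff_surjective_and_card π).mpr ⟨hπ, h⟩).1⟩
  rw [lt_iff_le_and_ne, and_iff_right hcard, ne_comm, Ne, ← hinj, Function.Injective]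
  push Not
  constructor
  · rintro ⟨x, y, hxy, hne⟩
    induction x using Quot.ind with | _ a =>
    induction y using Quot.ind with | _ b =>
    exact ⟨a, b, Quot.eq.mp hxy, fun h => hne (Quot.eq.mpr h)⟩
  · rintro ⟨a, b, hY, hX⟩
    exact ⟨Quot.mk _ a, Quot.mk _ b, Quot.eq.mpr hY, fun h => hX (Quot.eq.mp h)⟩

theorem kappa_compl_gt_iff [Finite V] (R : Set E) :
    G.kappa Rᶜ > G.kappa Set.univ ↔ ∃ U : Set V, (G.cutSet U).Nonempty ∧ G.cutSet U ⊆ R := by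
  rw [gt_iff_lt, kappa_lt_kappa_iff (Set.subset_univ _)]
  constructor
  · rintro ⟨a, b, hab, hne⟩
    refine ⟨{v | G.Conn Rᶜ a v}, ?_, fun e he => by_contra fun heR =>
      notMem_cutSet_component heR he⟩
    by_contra hempty
    rw [Set.not_nonempty_iff_eq_empty] at hempty
    exact hne ((Conn.mem_iff (U := {v | G.Conn Rᶜ a v}) (fun e _ he => hempty.subset he) hab).mp
      (Conn.refl a))
  · rintro ⟨U, ⟨e, he⟩, hUR⟩
    refine ⟨G.src e, G.tgt e, Conn.of_mem (Set.mem_univ e), fun h => ?_⟩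
    have := Conn.mem_iff (fun f (hf : f ∉ R) hfU => hf (hUR hfU)) h
    rw [mem_cutSet] at he
    tauto

theorem IsCut.exists_eq_cutSet [Finite V] {C : Set E} (hC : G.IsCut C) :
    ∃ U : Set V, C = G.cutSet U := by
  obtain ⟨U, hUne, hUC⟩ := (kappa_compl_gt_iff C).mp hC.2.1
  refine ⟨U, by_contra fun hne => hC.2.2 _ (hUC.ssubset_of_ne (Ne.symm hne)) hUne ?_⟩
  exact (kappa_compl_gt_iff _).mpr ⟨U, hUne, subset_rfl⟩

theorem exists_isCut_subset_cutSet [Finite V] [Finite E] {U : Set V} {e : E}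
    (he : e ∈ G.cutSet U) : ∃ C : Set E, G.IsCut C ∧ e ∈ C ∧ C ⊆ G.cutSet U := by
  obtain ⟨C, -, ⟨⟨W, rfl⟩, heC, hCU⟩, hmin⟩ := exists_minimal_le_of_wellFoundedLT
    (fun C => (∃ W : Set V, C = G.cutSet W) ∧ e ∈ C ∧ C ⊆ G.cutSet U) _ ⟨⟨U, rfl⟩, he, subset_rfl⟩
  refine ⟨G.cutSet W, ⟨⟨e, heC⟩, (kappa_compl_gt_iff _).mpr ⟨W, ⟨e, heC⟩, subset_rfl⟩, ?_⟩,
    heC, hCU⟩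
  intro C' hC' hC'ne hgt
  obtain ⟨W', ⟨f, hf⟩, hW'C'⟩ := (kappa_compl_gt_iff C').mp hgt
  have hW'W : G.cutSet W' ⊆ G.cutSet W := hW'C'.trans hC'.subset
  by_cases heW' : e ∈ G.cutSet W'
  · exact hC'.not_subset ((hmin ⟨⟨W', rfl⟩, heW', hW'W.trans hCU⟩ hW'W).trans hW'C')
  · -- Otherwise the symmetric difference `W ∆ W'` cuts off a smaller cut set through `e`.
    have hsd : G.cutSet (symmDiff W W') = G.cutSet W \ G.cutSet W' := by
      rw [cutSet_symmDiff, Set.symmDiff_def, Set.sdiff_eq_empty.mpr hW'W, Set.union_empty]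
    have hle : G.cutSet (symmDiff W W') ≤ G.cutSet W := hsd ▸ Set.sdiff_subset
    have := hmin ⟨⟨_, rfl⟩, hsd ▸ ⟨heC, heW'⟩, hle.trans hCU⟩ hle (hW'W hf)
    exact (hsd ▸ this).2 hf

theorem cyclic_iff_forall_isCut [Finite V] [Finite E] {B : Set E} :
    G.Cyclic B ↔ ∀ C : Set E, G.IsCut C → (C ∩ B).ncard ≠ 1 := by
  constructor
  · intro hB C hC hone
    obtain ⟨g, hg⟩ := Set.ncard_eq_one.mp hone
    obtain ⟨U, rfl⟩ := hC.exists_eq_cutSet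
    have hgU : g ∈ G.cutSet U := (hg.symm.subset rfl).1
    have hU : ∀ f ∈ B \ {g}, f ∉ G.cutSet U := fun f hf hfU => hf.2 (hg.subset ⟨hfU, hf.1⟩)
    have := Conn.mem_iff hU (hB g (hg.symm.subset rfl).2)
    rw [mem_cutSet] at hgU
    tauto
  · intro hB g hgB
    by_contra hne
    obtain ⟨C, hC, hgC, hCK⟩ := exists_isCut_subset_cutSet (G := G)
      (U := {v | G.Conn (B \ {g}) (G.src g) v}) (e := g) (by
        simp only [mem_cutSet, Set.mem_ofPred_eq]
        exact ⟨fun _ => hne, fun _ => Conn.refl _⟩)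
    refine hB C hC (Set.ncard_eq_one.mpr ⟨g, ?_⟩)
    refine Set.eq_singleton_iff_unique_mem.mpr ⟨⟨hgC, hgB⟩, fun f hf => ?_⟩
    by_contra hfg
    exact notMem_cutSet_component (X := B \ {g}) ⟨hf.2, hfg⟩ (hCK hf.1)

theorem isCycle_iff [Finite V] [Finite E] {C : Set E} :
    G.IsCycle C ↔ C.Nonempty ∧ G.Cyclic C ∧ ∀ C' ⊂ C, C'.Nonempty → ¬ G.Cyclic C' := by
  simp only [IsCycle, cyclic_iff_forall_isCut]

/-- Take a minimal subset of `X` joining the ends of `e`: together with `e` it is a cycle. -/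
theorem exists_isCycle_of_conn [Finite V] [Finite E] {e : E} (he : e ∉ X)
    (h : G.Conn X (G.src e) (G.tgt e)) : ∃ C, G.IsCycle C ∧ e ∈ C ∧ C ⊆ insert e X := by
  obtain ⟨Y, hYX, ⟨-, hY⟩, hmin⟩ := exists_minimal_le_of_wellFoundedLT
    (fun Y => Y ⊆ X ∧ G.Conn Y (G.src e) (G.tgt e)) X ⟨subset_rfl, h⟩
  have heY : e ∉ Y := fun h => he (hYX h)
  have hdel : ∀ g ∈ Y, ¬ G.Conn (Y \ {g}) (G.src e) (G.tgt e) := fun g hg hconn =>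
    (hmin ⟨Set.sdiff_subset.trans hYX, hconn⟩ Set.sdiff_subset hg).2 rfl
  refine ⟨insert e Y, isCycle_iff.mpr ⟨⟨e, Set.mem_insert e Y⟩, ?_, ?_⟩, Set.mem_insert e Y,
    Set.insert_subset_insert hYX⟩
  · rintro g (rfl | hg)
    · simpa [heY] using hY
    · have := (hY.mono (Set.subset_insert_sdiff_singleton g Y)).exchange (hdel g hg)
      refine this.mono (Set.insert_subset ⟨Set.mem_insert _ _, fun hge => heY (hge ▸ hg)⟩ ?_)
      exact Set.sdiff_subset_sdiff_left (Set.subset_insert e Y)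
  · intro C' hC' ⟨g, hg⟩ hC'cyc
    by_cases heC' : e ∈ C'
    · have hsub : C' \ {e} ⊆ Y := by simpa using Set.sdiff_subset_sdiff_left hC'.subset (t := {e})
      have := hmin ⟨hsub.trans hYX, hC'cyc e heC'⟩ hsub
      exact hC'.not_subset (Set.insert_subset heC' (fun f hf => (this hf).1))
    · have hgY : g ∈ Y := (hC'.subset hg).resolve_left (fun hge => heC' (hge ▸ hg))
      have hgconn : G.Conn (Y \ {g}) (G.src g) (G.tgt g) :=
        (hC'cyc g hg).mono (Set.sdiff_subset_sdiff_left fun f hf =>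
          (hC'.subset hf).resolve_left fun hfe => heC' (hfe ▸ hf))
      exact hdel g hgY
        (Conn.of_insert_of_conn hgconn (hY.mono (Set.subset_insert_sdiff_singleton g Y)))

section Activities

variable [LinearOrder E] [Finite V] [Finite E] {S : Set E} {e : E}

theorem mem_Lact_iff : e ∈ G.Lact S ↔ G.Conn (S ∩ Set.Ioi e) (G.src e) (G.tgt e) := by
  constructor
  · rintro ⟨C, hC, heC, hCS, hCe⟩
    refine ((isCycle_iff.mp hC).2.1 e heC).mono fun f hf => ?_
    exact ⟨(hCS f hf.1).resolve_left hf.2, lt_of_le_of_ne (hCe f hf.1) (Ne.symm hf.2)⟩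
  · intro h
    obtain ⟨C, hC, heC, hCS⟩ := exists_isCycle_of_conn (fun he => lt_irrefl e he.2) h
    refine ⟨C, hC, heC, fun f hf => ?_, fun f hf => ?_⟩
    · exact (hCS hf).imp id And.left
    · exact (hCS hf).elim (fun hfe => hfe.ge) fun hf => hf.2.le

theorem mem_Iact_iff :
    e ∈ G.Iact S ↔ ¬ G.Conn (Set.Iio e ∪ S ∩ Set.Ioi e) (G.src e) (G.tgt e) := by
  constructor
  · rintro ⟨C, hC, heC, hCS, hCe⟩ h
    obtain ⟨U, rfl⟩ := hC.exists_eq_cutSet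
    have hW : ∀ f ∈ Set.Iio e ∪ S ∩ Set.Ioi e, f ∉ G.cutSet U := by
      rintro f (hfe | ⟨hfS, hef⟩) hfU
      · exact (hCe f hfU).not_gt hfe
      · exact hCS f hfU hef.ne' hfS
    have := Conn.mem_iff hW h
    rw [mem_cutSet] at heC
    tauto
  · intro h
    obtain ⟨C, hC, heC, hCK⟩ := exists_isCut_subset_cutSet (G := G)
      (U := {v | G.Conn (Set.Iio e ∪ S ∩ Set.Ioi e) (G.src e) v}) (e := e) (by
        simp only [mem_cutSet, Set.mem_ofPred_eq]
        exact ⟨fun _ => h, fun _ => Conn.refl _⟩)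
    have hCW : ∀ f ∈ C, f ∉ Set.Iio e ∪ S ∩ Set.Ioi e := fun f hf hfW =>
      notMem_cutSet_component hfW (hCK hf)
    have hCe : ∀ f ∈ C, e ≤ f := fun f hf => not_lt.mp fun h' => hCW f hf (Or.inl h')
    refine ⟨C, hC, heC, fun f hf hfe hfS => ?_, hCe⟩
    exact hCW f hf (Or.inr ⟨hfS, lt_of_le_of_ne (hCe f hf) (Ne.symm hfe)⟩)

variable {S' P Z : Set E} {f₀ : E}

theorem conn_of_conn_insert_active (hf₀ : f₀ ∈ G.Iact S ∪ G.Lact S) (hef₀ : e < f₀)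
    (hSZ : S ∩ Set.Ioi f₀ ⊆ Z) (hZS : Z ⊆ Set.Iio f₀ ∪ S ∩ Set.Ioi f₀)
    (h : G.Conn (insert f₀ Z) (G.src e) (G.tgt e)) : G.Conn Z (G.src e) (G.tgt e) := by
  rcases hf₀ with hI | hL
  · by_contra hZ
    exact mem_Iact_iff.mp hI ((h.exchange hZ).mono (Set.insert_subset (Or.inl hef₀) hZS))
  · exact Conn.of_insert_of_conn ((mem_Lact_iff.mp hL).mono hSZ) h

theorem conn_union_inter_Ioi_iff_of_agree_off_active (hf₀ : f₀ ∈ G.Iact S ∪ G.Lact S)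
    (hSS' : ∀ f ≠ f₀, f ∈ S ↔ f ∈ S') (hP : P ⊆ Set.Iio e) :
    G.Conn (P ∪ S ∩ Set.Ioi e) (G.src e) (G.tgt e) ↔
      G.Conn (P ∪ S' ∩ Set.Ioi e) (G.src e) (G.tgt e) := by
  by_cases hef₀ : e < f₀
  · set Z := (P ∪ S ∩ Set.Ioi e) \ {f₀}
    have hSZ : S ∩ Set.Ioi f₀ ⊆ Z := fun f ⟨hfS, hf⟩ =>
      ⟨Or.inr ⟨hfS, hef₀.trans hf⟩, hf.ne'⟩
    have hZS : Z ⊆ Set.Iio f₀ ∪ S ∩ Set.Ioi f₀ := by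
      rintro f ⟨hfP | ⟨hfS, -⟩, hf⟩
      · exact Or.inl ((hP hfP).trans hef₀)
      · exact (lt_or_gt_of_ne hf).imp id fun h => ⟨hfS, h⟩
    have hiff : ∀ T : Set E, (∀ f ≠ f₀, f ∈ S ↔ f ∈ T) →
        (G.Conn (P ∪ T ∩ Set.Ioi e) (G.src e) (G.tgt e) ↔ G.Conn Z (G.src e) (G.tgt e)) := by
      intro T hT
      refine ⟨fun h => conn_of_conn_insert_active hf₀ hef₀ hSZ hZS (h.mono ?_), fun h => h.mono ?_⟩
      · intro f hf
        by_cases hff₀ : f = f₀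
        · exact Or.inl hff₀
        · exact Or.inr ⟨hf.imp id fun h => ⟨(hT f hff₀).mpr h.1, h.2⟩, hff₀⟩
      · rintro f ⟨hf, hff₀⟩
        exact hf.imp id fun h => ⟨(hT f hff₀).mp h.1, h.2⟩
    rw [hiff S fun _ _ => Iff.rfl, hiff S' hSS']
  · have : S ∩ Set.Ioi e = S' ∩ Set.Ioi e := by
      ext f
      refine and_congr_left fun hf => hSS' f ?_
      rintro rfl
      exact hef₀ hf
    rw [this]

theorem Iact_eq_and_Lact_eq_of_agree_off_active (hf₀ : f₀ ∈ G.Iact S ∪ G.Lact S)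
    (hSS' : ∀ f ≠ f₀, f ∈ S ↔ f ∈ S') : G.Iact S = G.Iact S' ∧ G.Lact S = G.Lact S' := by
  constructor <;> ext e
  · rw [mem_Iact_iff, mem_Iact_iff,
      conn_union_inter_Ioi_iff_of_agree_off_active hf₀ hSS' subset_rfl]
  · simpa only [mem_Lact_iff, Set.empty_union] using
      conn_union_inter_Ioi_iff_of_agree_off_active hf₀ hSS' (Set.empty_subset (Set.Iio e))

theorem Iact_eq_and_Lact_eq_of_agree_off {T D : Set E} (hDS : D ⊆ G.Iact S ∪ G.Lact S)
    (hST : ∀ g ∉ D, g ∈ S ↔ g ∈ T) : G.Iact S = G.Iact T ∧ G.Lact S = G.Lact T := by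
  induction D, D.toFinite using Set.Finite.induction_on generalizing S with
  | empty => obtain rfl : S = T := Set.ext fun g => hST g (Set.notMem_empty g); simp
  | @insert f₀ D hf₀D _ ih =>
    set S' := T ∩ {f₀} ∪ S \ {f₀}
    have hSS' : ∀ f ≠ f₀, f ∈ S ↔ f ∈ S' := fun f hf => by simp [S', hf]
    obtain ⟨hI, hL⟩ := Iact_eq_and_Lact_eq_of_agree_off_active (hDS (Set.mem_insert f₀ D)) hSS'
    refine hI ▸ hL ▸ ih (hI ▸ hL ▸ (Set.subset_insert f₀ D).trans hDS) fun g hg => ?_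
    by_cases hgf₀ : g = f₀
    · simp [S', hgf₀]
    · exact (hSS' g hgf₀).symm.trans (hST g (by simp [hgf₀, hg]))

end Activities

end MGraph

/-- Gordon–Traldi: if `S \ (Î(S) ∪ L̂(S)) ⊆ T ⊆ S ∪ Î(S) ∪ L̂(S)`
then `Î(S) = Î(T)` and `L̂(S) = L̂(T)`. -/
theorem activities_interval_invariance {V E : Type} [Fintype V] [Fintype E]
    [LinearOrder E] (G : MGraph V E) (S T : Set E)
    (h1 : S \ (G.Iact S ∪ G.Lact S) ⊆ T) (h2 : T ⊆ S ∪ G.Iact S ∪ G.Lact S) :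
    G.Iact S = G.Iact T ∧ G.Lact S = G.Lact T := by
  refine MGraph.Iact_eq_and_Lact_eq_of_agree_off subset_rfl fun g hg =>
    ⟨fun hgS => h1 ⟨hgS, hg⟩, fun hgT => ?_⟩
  rcases h2 hgT with (hgS | hgI) | hgL
  · exact hgS
  · exact absurd (Or.inl hgI) hg
  · exact absurd (Or.inr hgL) hg
end

section
/- Let G be a graph with n vertices, κ connected components, and a total order on its edges. For every spanning subgraph S ⊆ E(G), the number of cut active edges of S that are not in S equals κ(S) − κ, where κ(S) is the number of connected components of the spanning subgraph (V(G), S). -/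
open scoped Classical

/-!
Add the edges outside `S` to `S` in increasing order. An edge `e` lowers the number of components
by one exactly when its ends are not yet joined by `S ∪ {f < e}`, and otherwise leaves it
unchanged; so there are `κ(S) − κ` such edges. They are precisely the cut active edges outside
`S`: an inclusion-minimal edge set avoiding `S ∪ {f < e}` whose removal separates the ends of `e`
is a cut in which `e` is the least edge, and conversely, if `S ∪ {f < e}` joined the ends of `e`,
deleting `e` from a cut witnessing its activity would leave a smaller set that still disconnects.
-/

open Finset

namespace OrGraph

variable {V E : Type} (G : OrGraph V E)

abbrev comp (R : Set E) (v : V) : Quot (G.step R) := Quot.mk _ v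

/-- The closure of `R` in the cycle matroid of `G`. -/
def closure (R : Set E) : Set E := {e | G.comp R (G.src e) = G.comp R (G.tgt e)}

variable {G} {R R' : Set E} {e : E}

lemma step_mono (h : R ⊆ R') {a b : V} : G.step R a b → G.step R' a b
  | ⟨f, hf, hab⟩ => ⟨f, h hf, hab⟩

lemma eq_of_comp_eq {β : Sort*} (φ : V → β) (hφ : ∀ f ∈ R, φ (G.src f) = φ (G.tgt f))
    {a b : V} (h : G.comp R a = G.comp R b) : φ a = φ b :=
  congrArg (Quot.lift φ fun _ _ ⟨f, hf, hab⟩ => by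
    rcases hab with ⟨rfl, rfl⟩ | ⟨rfl, rfl⟩
    exacts [hφ f hf, (hφ f hf).symm]) h

lemma subset_closure : R ⊆ G.closure R :=
  fun f hf => Quot.sound ⟨f, hf, .inl ⟨rfl, rfl⟩⟩

lemma comp_eq_of_subset (h : R ⊆ R') {a b : V} (hab : G.comp R a = G.comp R b) :
    G.comp R' a = G.comp R' b :=
  eq_of_comp_eq (G.comp R') (fun _ hf => subset_closure (h hf)) hab

lemma closure_mono (h : R ⊆ R') : G.closure R ⊆ G.closure R' :=
  fun _ hf => comp_eq_of_subset h hf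

lemma kappa_anti [Finite V] (h : R ⊆ R') : G.kappa R' ≤ G.kappa R :=
  Nat.card_le_card_of_surjective (Quot.mapRight fun _ _ => step_mono h)
    (Quot.ind fun v => ⟨Quot.mk _ v, rfl⟩)

lemma kappa_eq_of_subset_closure (h : R ⊆ R') (h' : R' ⊆ G.closure R) :
    G.kappa R' = G.kappa R := by
  refine (Nat.card_congr <|
    Equiv.ofBijective (Quot.mapRight fun _ _ => step_mono h) ⟨?_, ?_⟩).symm
  · rintro ⟨a⟩ ⟨b⟩ hab
    exact eq_of_comp_eq (G.comp R) h' hab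
  · exact Quot.ind fun v => ⟨Quot.mk _ v, rfl⟩

lemma kappa_insert_of_mem_closure (he : e ∈ G.closure R) : G.kappa (insert e R) = G.kappa R :=
  kappa_eq_of_subset_closure (Set.subset_insert e R) (Set.insert_subset he subset_closure)

lemma kappa_insert_of_notMem_closure [Finite V] (he : e ∉ G.closure R) :
    G.kappa R = G.kappa (insert e R) + 1 := by
  -- The classes of `insert e R` are those of `R`, except that the class of `src e` is merged
  -- into that of `tgt e`.
  set x := G.comp R (G.src e)
  have htx : G.comp R (G.tgt e) ≠ x := Ne.symm he
  let ψ : V → ({x}ᶜ : Set (Quot (G.step R))) :=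
    fun v => if h : G.comp R v = x then ⟨_, htx⟩ else ⟨_, h⟩
  have hψ : ∀ f ∈ insert e R, ψ (G.src f) = ψ (G.tgt f) := by
    rintro f (rfl | hf)
    · simp [ψ, x, htx]
    · simp only [ψ, show G.comp R (G.src f) = G.comp R (G.tgt f) from subset_closure hf]
  let eqv : Quot (G.step (insert e R)) ≃ ({x}ᶜ : Set (Quot (G.step R))) :=
    { toFun := Quot.lift ψ fun _ _ hab => eq_of_comp_eq ψ hψ (Quot.sound hab)
      invFun := fun q => Quot.mapRight (fun _ _ => step_mono (Set.subset_insert e R)) q.1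
      left_inv := Quot.ind fun v => by
        by_cases h : G.comp R v = x
        · simp only [ψ, h, dite_true]
          exact (subset_closure (Set.mem_insert e R)).symm.trans
            (comp_eq_of_subset (Set.subset_insert e R) h.symm)
        · simp only [ψ, h, dite_false]
          rfl
      right_inv := fun ⟨q, hq⟩ => by
        induction q using Quot.ind
        exact dif_neg hq }
  rw [kappa, kappa, Nat.card_congr eqv, Nat.card_coe_set_eq, ← Set.ncard_add_ncard_compl {x},
    Set.ncard_singleton, add_comm]

lemma kappa_eq_kappa_union_add_card [Finite V] [LinearOrder E] (S : Set E) (A : Finset E) :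
    G.kappa S =
      G.kappa (S ∪ A) + #{e ∈ A | e ∉ G.closure (S ∪ ((A : Set E) ∩ Set.Iio e))} := by
  induction A using Finset.induction_on_max with
  | empty => simp
  | insert a A ha ih =>
    have hbelow : ∀ e ∈ A, (insert a ↑A : Set E) ∩ Set.Iio e = ↑A ∩ Set.Iio e :=
      fun e he => Set.insert_inter_of_notMem (ha e he).not_gt
    have hA : (A : Set E) ∩ Set.Iio a = A := Set.inter_eq_left.2 ha
    rw [filter_insert, coe_insert, Set.insert_inter_of_notMem Set.self_notMem_Iio, hA,
      filter_congr fun e he => by rw [hbelow e he], Set.union_insert]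
    by_cases hcl : a ∈ G.closure (S ∪ A)
    · rw [if_neg (not_not.2 hcl), kappa_insert_of_mem_closure hcl, ih]
    · rw [if_pos hcl, card_insert_of_notMem fun h => (ha a (mem_filter.1 h).1).false, ih,
        kappa_insert_of_notMem_closure hcl]
      ring

lemma ends_of_comp_insert_eq {g : E} {a b : V} (hab : G.comp R a ≠ G.comp R b)
    (h : G.comp (insert g R) a = G.comp (insert g R) b) :
    (G.comp R (G.src g) = G.comp R a ∧ G.comp R (G.tgt g) = G.comp R b) ∨
      (G.comp R (G.src g) = G.comp R b ∧ G.comp R (G.tgt g) = G.comp R a) := by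
  have hinv : ∀ c, (G.comp R (G.src g) = G.comp R c ↔ G.comp R (G.tgt g) = G.comp R c) →
      (G.comp R a = G.comp R c ↔ G.comp R b = G.comp R c) := fun c hc =>
    Iff.of_eq <| eq_of_comp_eq (fun v => G.comp R v = G.comp R c)
      (by rintro f (rfl | hf); exacts [propext hc, congrArg (· = _) (subset_closure hf)]) h
  have ha := mt (hinv a) (by simpa using Ne.symm hab)
  have hb := mt (hinv b) (by simpa using hab)
  grind

lemma isCut_of_minimal [Finite V] {C : Set E} (hC : Minimal (fun C => e ∉ G.closure Cᶜ) C) :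
    G.IsCut C := by
  obtain ⟨hsep, hmin⟩ := hC
  set c := G.comp Cᶜ
  -- By minimality, putting any `g ∈ C` back rejoins the ends of `e`.
  have hcross : ∀ g ∈ C,
      (c (G.src g) = c (G.src e) ∧ c (G.tgt g) = c (G.tgt e)) ∨
      (c (G.src g) = c (G.tgt e) ∧ c (G.tgt g) = c (G.src e)) :=
    fun g hg => ends_of_comp_insert_eq hsep <| by_contra fun h =>
      (hmin (y := C \ {g}) (show e ∉ G.closure (C \ {g})ᶜ by
        rwa [Set.compl_sdiff, Set.singleton_union]) Set.sdiff_subset hg).2 rfl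
  refine ⟨Set.nonempty_iff_ne_empty.2 fun h => hsep ?_, ?_, fun C' hC'C _ hgt => ?_⟩
  · rw [h, Set.compl_empty]
    exact subset_closure (Set.mem_univ e)
  · have := kappa_insert_of_notMem_closure hsep
    have := kappa_anti (G := G) (Set.subset_univ (insert e Cᶜ))
    omega
  obtain ⟨g₀, hg₀C, hg₀C'⟩ := Set.exists_of_ssubset hC'C
  have lift : ∀ {a b}, c a = c b → G.comp C'ᶜ a = G.comp C'ᶜ b :=
    comp_eq_of_subset (Set.compl_subset_compl.2 hC'C.subset)
  have hjoin : e ∈ G.closure C'ᶜ := by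
    rcases hcross g₀ hg₀C with ⟨hs, ht⟩ | ⟨hs, ht⟩
    · exact (lift hs).symm.trans ((subset_closure hg₀C').trans (lift ht))
    · exact (lift ht).symm.trans ((subset_closure hg₀C').symm.trans (lift hs))
  have hall : Set.univ ⊆ G.closure C'ᶜ := by
    intro g _
    by_cases hg : g ∈ C
    · rcases hcross g hg with ⟨hs, ht⟩ | ⟨hs, ht⟩
      · exact (lift hs).trans (hjoin.trans (lift ht).symm)
      · exact (lift hs).trans (hjoin.symm.trans (lift ht).symm)
    · exact subset_closure fun hg' => hg (hC'C.subset hg')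
  exact hgt.ne (kappa_eq_of_subset_closure (Set.subset_univ _) hall)

lemma mem_Iact_diff_iff [Finite V] [Finite E] [LinearOrder E] {S : Set E} :
    e ∈ G.Iact S \ S ↔ e ∉ G.closure (S ∪ Set.Iio e) := by
  constructor
  · rintro ⟨⟨C, hC, heC, hCS, hemin⟩, heS⟩ hcl
    have hsub : S ∪ Set.Iio e ⊆ Cᶜ := by
      rintro f (hfS | hfe) hfC
      · exact hCS f hfC (by rintro rfl; exact heS hfS) hfS
      · exact (hemin f hfC).not_gt hfe
    have hk := kappa_insert_of_mem_closure (closure_mono hsub hcl)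
    rw [← Set.singleton_union, ← Set.compl_sdiff] at hk
    rcases (C \ {e}).eq_empty_or_nonempty with h | h
    · rw [h, Set.compl_empty] at hk
      exact hC.2.1.ne hk
    · exact hC.2.2 _ (Set.sdiff_singleton_ssubset.2 heC) h (hk ▸ hC.2.1)
  · intro he
    obtain ⟨C, hCR, hC⟩ := exists_minimal_le_of_wellFoundedLT (fun C => e ∉ G.closure Cᶜ)
      (S ∪ Set.Iio e)ᶜ (by rwa [compl_compl])
    have heC : e ∈ C := by_contra fun h => hC.prop (subset_closure h)
    exact ⟨⟨C, isCut_of_minimal hC, heC, fun f hf _ hfS => hCR hf (.inl hfS),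
      fun f hf => not_lt.1 fun hfe => hCR hf (.inr hfe)⟩, fun heS => hCR heC (.inl heS)⟩

end OrGraph

/-- Gordon–Traldi: `|Î(S) \ S| = κ(S) − κ` for every spanning
subgraph `S`. -/
theorem Iact_diff_ncard {V E : Type} [Fintype V] [Fintype E] [LinearOrder E]
    (G : OrGraph V E) (S : Set E) :
    (G.Iact S \ S).ncard = G.kappa S - G.kappa Set.univ := by
  have hcount := G.kappa_eq_kappa_union_add_card S univ
  simp only [coe_univ, Set.union_univ, Set.univ_inter] at hcount
  have hIact : G.Iact S \ S = ↑({e | e ∉ G.closure (S ∪ Set.Iio e)} : Finset E) := by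
    ext e
    rw [OrGraph.mem_Iact_diff_iff]
    simp
  rw [hIact, Set.ncard_coe_finset]
  omega
end

section
/- Let G be a graph with n vertices and a total order on its edges. For every spanning subgraph S ⊆ E(G), the number of cycle active edges of S that belong to S equals κ(S) + |S| − n, where κ(S) is the number of connected components of (V(G), S). -/
open scoped Classical

/-- A multigraph with a fixed reference orientation: each edge `e` has a
source `src e` and a target `tgt e` (the positive direction `e⁺ = (src e, tgt e)`). -/
structure OGraph (V E : Type) where
  src : E → V
  tgt : E → V

namespace OGraph

variable {V E : Type} (G : OGraph V E)

/-- Two vertices are joined by some edge of `S`. -/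
def step (S : Set E) (a b : V) : Prop :=
  ∃ e ∈ S, (G.src e = a ∧ G.tgt e = b) ∨ (G.src e = b ∧ G.tgt e = a)

/-- `κ(S)`: the number of connected components of the spanning subgraph `(V, S)`. -/
noncomputable def kappa (S : Set E) : ℕ :=
  Nat.card (Quot (G.step S))

/-- A cut of `G`: a minimal nonempty edge set whose removal increases the
number of connected components. -/
def IsCut (C : Set E) : Prop :=
  C.Nonempty ∧ G.kappa Cᶜ > G.kappa Set.univ ∧
    ∀ C' : Set E, C' ⊂ C → C'.Nonempty → ¬ (G.kappa C'ᶜ > G.kappa Set.univ)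

/-- A cycle of `G`: a minimal nonempty edge set meeting no cut of `G` in
precisely one element. -/
def IsCycle (C : Set E) : Prop :=
  C.Nonempty ∧ (∀ Cu : Set E, G.IsCut Cu → (Cu ∩ C).ncard ≠ 1) ∧
    ∀ C' : Set E, C' ⊂ C → C'.Nonempty →
      ¬ (∀ Cu : Set E, G.IsCut Cu → (Cu ∩ C').ncard ≠ 1)

/-- Head of edge `e` under orientation `O` (`O e = true` means the reference
direction `src e → tgt e`). -/
def ohead (O : E → Bool) (e : E) : V := if O e then G.tgt e else G.src e

/-- Tail of edge `e` under orientation `O`. -/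
def otail (O : E → Bool) (e : E) : V := if O e then G.src e else G.tgt e

/-- Edge `e` crosses the vertex set `U` (exactly one endpoint in `U`). -/
def crossing (U : Set V) (e : E) : Prop := G.src e ∈ U ↔ G.tgt e ∉ U

/-- A directed cut of the orientation `O`: a cut all of whose edges are
oriented consistently out of some vertex set `U`. -/
def IsDirCut (O : E → Bool) (C : Set E) : Prop :=
  G.IsCut C ∧ ∃ U : Set V, (∀ e, e ∈ C ↔ G.crossing U e) ∧ ∀ e ∈ C, G.otail O e ∈ U

/-- A directed cycle of the orientation `O`: a cycle oriented consistently,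
i.e. in-degree equals out-degree at each vertex within the cycle. -/
def IsDirCycle (O : E → Bool) (C : Set E) : Prop :=
  G.IsCycle C ∧ ∀ v : V,
    {e ∈ C | G.ohead O e = v}.ncard = {e ∈ C | G.otail O e = v}.ncard

section Activities

variable [LinearOrder E]

/-- `Î(S)`: cut active edges of the spanning subgraph `S`. -/
def Iact (S : Set E) : Set E :=
  {e | ∃ C : Set E, G.IsCut C ∧ e ∈ C ∧ (∀ f ∈ C, f ≠ e → f ∉ S) ∧ ∀ f ∈ C, e ≤ f}

/-- `L̂(S)`: cycle active edges of the spanning subgraph `S`. -/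
def Lact (S : Set E) : Set E :=
  {e | ∃ C : Set E, G.IsCycle C ∧ e ∈ C ∧ (∀ f ∈ C, f = e ∨ f ∈ S) ∧ ∀ f ∈ C, e ≤ f}

/-- `I(O)`: cut active edges of the orientation `O`. -/
def Ior (O : E → Bool) : Set E :=
  {e | ∃ C : Set E, G.IsDirCut O C ∧ e ∈ C ∧ ∀ f ∈ C, e ≤ f}

/-- `L(O)`: cycle active edges of the orientation `O`. -/
def Lor (O : E → Bool) : Set E :=
  {e | ∃ C : Set E, G.IsDirCycle O C ∧ e ∈ C ∧ ∀ f ∈ C, e ≤ f}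

end Activities

/-- The Tutte polynomial via the corank-nullity expansion, evaluated in a
commutative ring. -/
noncomputable def tutte [Fintype V] [Fintype E] (R : Type) [CommRing R] (x y : R) : R :=
  ∑ S : Finset E, (x - 1) ^ (G.kappa ↑S - G.kappa Set.univ) *
    (y - 1) ^ (S.card + G.kappa ↑S - Fintype.card V)

/-! ### Fourientations.
A fourientation is `F : E → Bool × Bool`, recording whether `e⁺` resp. `e⁻`
belongs to the fourientation. -/

/-- A potential cut of the fourientation `F`: a directed cut each of whose
edges is unoriented in `F` or oriented in the cut direction (out of `U`). -/
def PotCut (F : E → Bool × Bool) (C : Set E) : Prop :=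
  G.IsCut C ∧ ∃ U : Set V, (∀ e, e ∈ C ↔ G.crossing U e) ∧
    ∀ e ∈ C, (G.src e ∈ U → (F e).2 = false) ∧ (G.src e ∉ U → (F e).1 = false)

/-- A potential cycle of the fourientation `F`, with cyclic direction `dir`:
a consistently directed cycle each of whose edges has its `dir`-direction
present in `F` (so each edge is bioriented or oriented in the cycle direction). -/
def PotCycle (F : E → Bool × Bool) (C : Set E) (dir : E → Bool) : Prop :=
  G.IsCycle C ∧
    (∀ v : V, {e ∈ C | G.ohead dir e = v}.ncard = {e ∈ C | G.otail dir e = v}.ncard) ∧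
    ∀ e ∈ C, (if dir e then (F e).1 else (F e).2) = true

/-- Add the direction `d` of edge `e` to the fourientation `F`. -/
def addDir [DecidableEq E] (F : E → Bool × Bool) (e : E) (d : Bool) : E → Bool × Bool :=
  Function.update F e (if d then (true, (F e).2) else ((F e).1, true))

/-- Remove the direction `d` of edge `e` from the fourientation `F`. -/
def remDir [DecidableEq E] (F : E → Bool × Bool) (e : E) (d : Bool) : E → Bool × Bool :=
  Function.update F e (if d then (false, (F e).2) else ((F e).1, false))

/-- `ᵉO`: toggle the status of the edge `e` in the fourientation `F`. -/
def toggle [DecidableEq E] (F : E → Bool × Bool) (e : E) : E → Bool × Bool :=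
  Function.update F e ((F e).2, (F e).1)

section FourActivities

variable [LinearOrder E]

/-- `I^o(O)`: oriented edges that are minimal in some potential cut. -/
def Io (F : E → Bool × Bool) : Set E :=
  {f | (F f).1 ≠ (F f).2 ∧ ∃ C : Set E, G.PotCut F C ∧ f ∈ C ∧ ∀ g ∈ C, f ≤ g}

/-- `L^o(O)`: oriented edges that are minimal in some potential cycle. -/
def Lo (F : E → Bool × Bool) : Set E :=
  {f | (F f).1 ≠ (F f).2 ∧
    ∃ (C : Set E) (dir : E → Bool), G.PotCycle F C dir ∧ f ∈ C ∧ ∀ g ∈ C, f ≤ g}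

/-- `I^u(O)`: unoriented edges `f` minimal in some potential cut of
`O ∪ {f^{σᵤ(f)}}`. -/
def Iu (σu : E → Bool) (F : E → Bool × Bool) : Set E :=
  {f | F f = (false, false) ∧
    ∃ C : Set E, G.PotCut (addDir F f (σu f)) C ∧ f ∈ C ∧ ∀ g ∈ C, f ≤ g}

/-- `L^b(O)`: bioriented edges `f` minimal in some potential cycle of
`O \ {f^{σ_b(f)}}`. -/
def Lb (σb : E → Bool) (F : E → Bool × Bool) : Set E :=
  {f | F f = (true, true) ∧
    ∃ (C : Set E) (dir : E → Bool),
      G.PotCycle (remDir F f (σb f)) C dir ∧ f ∈ C ∧ ∀ g ∈ C, f ≤ g}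

end FourActivities

/-- The deletion `G − e`. -/
def del (e : E) : OGraph V {f : E // f ≠ e} :=
  ⟨fun f => G.src f.1, fun f => G.tgt f.1⟩

/-- The contraction `G/e`: identify the endpoints of `e` and remove `e`. -/
def contr (e : E) : OGraph (Quot (fun a b => a = G.src e ∧ b = G.tgt e)) {f : E // f ≠ e} :=
  ⟨fun f => Quot.mk _ (G.src f.1), fun f => Quot.mk _ (G.tgt f.1)⟩

/-! ### Potential walks in a fourientation. A walk step is a pair `(e, d)` of an
edge and a chosen direction (`d = true` for the reference direction). -/

/-- Tail of the directed edge `(e, d)`. -/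
def ftail (p : E × Bool) : V := if p.2 then G.src p.1 else G.tgt p.1

/-- Head of the directed edge `(e, d)`. -/
def fhead (p : E × Bool) : V := if p.2 then G.tgt p.1 else G.src p.1

/-- The direction `d` of `e` is present in the fourientation `F`. -/
def present (F : E → Bool × Bool) (p : E × Bool) : Prop :=
  (if p.2 then (F p.1).1 else (F p.1).2) = true

/-- A potential walk of the fourientation `F` from `a` to `b`: each step uses
a direction present in `F` (so each edge is bioriented or oriented
consistently with the walk). -/
def IsPWalk (F : E → Bool × Bool) : V → List (E × Bool) → V → Prop
  | a, [], b => a = b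
  | a, p :: rest, b => G.ftail p = a ∧ present F p ∧ IsPWalk F (G.fhead p) rest b

/-- A potential path: a potential walk visiting pairwise distinct vertices. -/
def IsPPath (F : E → Bool × Bool) (a : V) (w : List (E × Bool)) (b : V) : Prop :=
  G.IsPWalk F a w b ∧ (a :: w.map G.fhead).Nodup

end OGraph

/-! An edge `e ∈ S` is cycle active iff the edges of `S` larger than `e` connect its ends, since
cycles are exactly the minimal nonempty bridgeless edge sets. Build `S` by adding its edges in
decreasing order: the new, smallest edge is active iff its ends are already connected, i.e. iff
it leaves `κ` unchanged; otherwise it lowers `κ` by one. So the count of active edges plus `n`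
and `κ(S) + |S|` grow in step. -/

theorem Function.Surjective.nat_card_eq_add_one {α β : Type*} [Finite α] {φ : α → β}
    (hφ : Function.Surjective φ) {a b : α} (hab : a ≠ b) (h : φ a = φ b)
    (hinj : Set.InjOn φ {b}ᶜ) : Nat.card α = Nat.card β + 1 := by
  have himage : φ '' {b}ᶜ = Set.univ := by
    refine Set.eq_univ_of_forall fun y => ?_
    obtain ⟨x, rfl⟩ := hφ y
    by_cases hx : x = b
    · exact ⟨a, hab, hx ▸ h⟩
    · exact ⟨x, hx, rfl⟩
  rw [← Set.ncard_univ β, ← himage, hinj.ncard_image, ← Set.ncard_univ α,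
    ← Set.ncard_sdiff_singleton_add_one (Set.mem_univ b), Set.compl_eq_univ_sdiff]

namespace OGraph

variable {V E : Type} {G : OGraph V E}

section Reachable

variable (G) in
def Reachable (S : Set E) : V → V → Prop := Relation.ReflTransGen (G.step S)

instance (S : Set E) : Std.Symm (G.step S) where
  symm _ _ := fun ⟨e, he, h⟩ => ⟨e, he, h.symm⟩

variable {S A B T : Set E} {x y : V} {e f : E}

lemma Reachable.refl (x : V) : G.Reachable S x x := Relation.ReflTransGen.refl

lemma Reachable.symm (h : G.Reachable S x y) : G.Reachable S y x :=
  Std.Symm.symm (r := Relation.ReflTransGen (G.step S)) _ _ h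

lemma Reachable.trans {z : V} (h₁ : G.Reachable S x y) (h₂ : G.Reachable S y z) :
    G.Reachable S x z :=
  Relation.ReflTransGen.trans h₁ h₂

lemma Reachable.mono (hAB : A ⊆ B) (h : G.Reachable A x y) : G.Reachable B x y :=
  Relation.ReflTransGen.mono (fun _ _ ⟨e, he, h⟩ => ⟨e, hAB he, h⟩) _ _ h

lemma reachable_of_mem (he : e ∈ S) : G.Reachable S (G.src e) (G.tgt e) :=
  Relation.ReflTransGen.single ⟨e, he, Or.inl ⟨rfl, rfl⟩⟩

lemma Reachable.of_forall_mem (hB : ∀ e ∈ B, G.Reachable A (G.src e) (G.tgt e))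
    (h : G.Reachable B x y) : G.Reachable A x y := by
  induction h with
  | refl => exact .refl x
  | tail _ hstep ih =>
    obtain ⟨e, he, ⟨rfl, rfl⟩ | ⟨rfl, rfl⟩⟩ := hstep
    · exact ih.trans (hB e he)
    · exact ih.trans (hB e he).symm

lemma Reachable.of_insert (h : G.Reachable (insert f A) x y) :
    G.Reachable A x y ∨ (G.Reachable A x (G.src f) ∧ G.Reachable A (G.tgt f) y) ∨
      (G.Reachable A x (G.tgt f) ∧ G.Reachable A (G.src f) y) := by
  induction h with
  | refl => exact Or.inl (.refl x)
  | tail _ hstep ih =>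
    obtain ⟨e, rfl | he, hends⟩ := hstep
    · rcases hends with ⟨rfl, rfl⟩ | ⟨rfl, rfl⟩ <;> rcases ih with ih | ⟨ih, -⟩ | ⟨ih, -⟩
      · exact Or.inr (Or.inl ⟨ih, .refl _⟩)
      · exact Or.inr (Or.inl ⟨ih, .refl _⟩)
      · exact Or.inl ih
      · exact Or.inr (Or.inr ⟨ih, .refl _⟩)
      · exact Or.inl ih
      · exact Or.inr (Or.inr ⟨ih, .refl _⟩)
    · have hstep := Relation.ReflTransGen.single (r := G.step A) ⟨e, he, hends⟩
      rcases ih with ih | ⟨ih₁, ih₂⟩ | ⟨ih₁, ih₂⟩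
      · exact Or.inl (ih.trans hstep)
      · exact Or.inr (Or.inl ⟨ih₁, ih₂.trans hstep⟩)
      · exact Or.inr (Or.inr ⟨ih₁, ih₂.trans hstep⟩)

lemma reachable_of_reachable_insert (hAT : A ⊆ T) (hT : G.Reachable T x y)
    (h : G.Reachable (insert f A) x y) (hA : ¬ G.Reachable A x y) :
    G.Reachable T (G.src f) (G.tgt f) := by
  rcases h.of_insert with h | ⟨h₁, h₂⟩ | ⟨h₁, h₂⟩
  · exact absurd h hA
  · exact ((h₁.mono hAT).symm.trans hT).trans (h₂.mono hAT).symm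
  · exact ((h₂.mono hAT).trans hT.symm).trans (h₁.mono hAT)

end Reachable

section Kappa

variable {S A B : Set E} {f : E}

lemma mk_eq_mk_iff_reachable {x y : V} :
    Quot.mk (G.step S) x = Quot.mk (G.step S) y ↔ G.Reachable S x y := by
  rw [Quot.eq, Relation.EqvGen.eqvGen_eq_reflTransGen]
  rfl

variable (G) in
def componentMap (h : A ⊆ B) : Quot (G.step A) → Quot (G.step B) :=
  Quot.map id fun _ _ ⟨e, he, hends⟩ => ⟨e, h he, hends⟩

lemma componentMap_surjective (h : A ⊆ B) : Function.Surjective (G.componentMap h) :=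
  Quot.ind fun x => ⟨Quot.mk _ x, rfl⟩

lemma componentMap_injective (hAB : A ⊆ B) (h : ∀ e ∈ B, G.Reachable A (G.src e) (G.tgt e)) :
    Function.Injective (G.componentMap hAB) := by
  rintro ⟨x⟩ ⟨y⟩ hxy
  exact mk_eq_mk_iff_reachable.2 ((mk_eq_mk_iff_reachable.1 hxy).of_forall_mem h)

lemma kappa_antitone [Finite V] : Antitone G.kappa := fun _ _ h =>
  Nat.card_le_card_of_surjective _ (componentMap_surjective h)

lemma kappa_eq_of_subset (hAB : A ⊆ B) (h : ∀ e ∈ B, G.Reachable A (G.src e) (G.tgt e)) :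
    G.kappa B = G.kappa A :=
  (Nat.card_eq_of_bijective _ ⟨componentMap_injective hAB h, componentMap_surjective hAB⟩).symm

lemma kappa_insert_of_reachable (h : G.Reachable A (G.src f) (G.tgt f)) :
    G.kappa (insert f A) = G.kappa A :=
  kappa_eq_of_subset (Set.subset_insert f A) fun _ he => he.elim (· ▸ h) reachable_of_mem

lemma kappa_empty : G.kappa ∅ = Nat.card V := by
  refine (Nat.card_eq_of_bijective _ ⟨fun x y hxy => ?_, Quot.mk_surjective⟩).symm
  induction mk_eq_mk_iff_reachable.1 hxy with
  | refl => rfl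
  | tail _ hstep =>
    obtain ⟨_, he, -⟩ := hstep
    exact absurd he (Set.notMem_empty _)

lemma kappa_insert_of_not_reachable [Finite V] (h : ¬ G.Reachable A (G.src f) (G.tgt f)) :
    G.kappa A = G.kappa (insert f A) + 1 := by
  refine (componentMap_surjective (Set.subset_insert f A)).nat_card_eq_add_one
    (mt mk_eq_mk_iff_reachable.1 h) (mk_eq_mk_iff_reachable.2 (reachable_of_mem (.inl rfl))) ?_
  rintro ⟨x⟩ hx ⟨y⟩ hy hxy
  rcases (mk_eq_mk_iff_reachable.1 hxy).of_insert with hxy | ⟨-, hy'⟩ | ⟨hx', -⟩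
  · exact mk_eq_mk_iff_reachable.2 hxy
  · exact absurd (mk_eq_mk_iff_reachable.2 hy'.symm) hy
  · exact absurd (mk_eq_mk_iff_reachable.2 hx') hx

end Kappa

section Cut

variable {A C : Set E} {f g : E}

lemma IsCut.not_reachable_compl (hC : G.IsCut C) (hg : g ∈ C) :
    ¬ G.Reachable Cᶜ (G.src g) (G.tgt g) := by
  intro h
  have hk : G.kappa (C \ {g})ᶜ = G.kappa Cᶜ := by
    rw [Set.compl_sdiff, Set.singleton_union]
    exact kappa_insert_of_reachable h
  by_cases hne : (C \ {g}).Nonempty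
  · exact hC.2.2 _ (Set.sdiff_singleton_ssubset.2 hg) hne (hk ▸ hC.2.1)
  · rw [Set.not_nonempty_iff_eq_empty.1 hne, Set.compl_empty] at hk
    exact hC.2.1.ne hk

/-- The cut is a minimal `D` disjoint from `A` such that `Dᶜ` does not connect the ends of `f`:
by minimality every edge of `D` joins the component of `G.src f` to that of `G.tgt f` in `Dᶜ`,
so removing a proper part of `D` disconnects nothing. -/
lemma exists_isCut_of_not_reachable [Finite V] [Finite E]
    (hn : ¬ G.Reachable A (G.src f) (G.tgt f)) : ∃ C, G.IsCut C ∧ f ∈ C ∧ Disjoint C A := by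
  obtain ⟨D, ⟨hDA, hDn⟩, hDmin⟩ := exists_minimal_of_wellFoundedLT
    (fun D : Set E => Disjoint D A ∧ ¬ G.Reachable Dᶜ (G.src f) (G.tgt f))
    ⟨Aᶜ, disjoint_compl_left, by rwa [compl_compl]⟩
  have hfD : f ∈ D := by_contra fun hf => hDn (reachable_of_mem hf)
  have hjoin : ∀ g ∈ D, G.Reachable (insert g Dᶜ) (G.src f) (G.tgt f) := by
    intro g hg
    by_contra hn
    have hDg : D ⊆ D \ {g} := hDmin ⟨hDA.mono_left Set.sdiff_subset,
      by rwa [Set.compl_sdiff, Set.singleton_union]⟩ Set.sdiff_subset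
    exact (hDg hg).2 rfl
  refine ⟨D, ⟨⟨f, hfD⟩, ?_, fun C' hC'D _ hlt => ?_⟩, hfD, hDA⟩
  · calc G.kappa Set.univ ≤ G.kappa (insert f Dᶜ) := kappa_antitone (Set.subset_univ _)
      _ < G.kappa Dᶜ := by rw [kappa_insert_of_not_reachable hDn]; exact lt_add_one _
  · obtain ⟨g, hgD, hgC'⟩ := Set.exists_of_ssubset hC'D
    have hDC' : Dᶜ ⊆ C'ᶜ := Set.compl_subset_compl.2 hC'D.subset
    have hends : G.Reachable C'ᶜ (G.src f) (G.tgt f) :=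
      (hjoin g hgD).mono (Set.insert_subset hgC' hDC')
    refine hlt.ne (kappa_eq_of_subset (Set.subset_univ _) fun e _ => ?_)
    by_cases he : e ∈ C'
    · exact reachable_of_reachable_insert hDC' hends (hjoin e (hC'D.subset he)) hDn
    · exact reachable_of_mem he

lemma exists_isCut_inter_eq_singleton [Finite V] [Finite E] (hg : g ∈ C)
    (hn : ¬ G.Reachable (C \ {g}) (G.src g) (G.tgt g)) : ∃ D, G.IsCut D ∧ D ∩ C = {g} := by
  obtain ⟨D, hD, hgD, hdisj⟩ := exists_isCut_of_not_reachable hn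
  refine ⟨D, hD, Set.eq_singleton_iff_unique_mem.2 ⟨⟨hgD, hg⟩, fun x ⟨hxD, hxC⟩ => ?_⟩⟩
  by_contra hxg
  exact Set.disjoint_left.1 hdisj hxD ⟨hxC, hxg⟩

end Cut

section Cycle

variable {A C : Set E} {e : E}

variable (G) in
def IsBridgeless (C : Set E) : Prop := ∀ g ∈ C, G.Reachable (C \ {g}) (G.src g) (G.tgt g)

variable [Finite V] [Finite E]

lemma forall_isCut_ncard_inter_ne_one_iff :
    (∀ D, G.IsCut D → (D ∩ C).ncard ≠ 1) ↔ G.IsBridgeless C := by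
  constructor
  · intro h g hg
    by_contra hn
    obtain ⟨D, hD, hDC⟩ := exists_isCut_inter_eq_singleton hg hn
    exact h D hD (by rw [hDC, Set.ncard_singleton])
  · intro hC D hD hone
    obtain ⟨g, hDC⟩ := Set.ncard_eq_one.1 hone
    have hg : g ∈ D ∩ C := hDC ▸ rfl
    refine hD.not_reachable_compl hg.1 ((hC g hg.2).mono fun x hx hxD => hx.2 ?_)
    rw [← hDC]
    exact ⟨hxD, hx.1⟩

lemma isCycle_iff_minimal : G.IsCycle C ↔ Minimal (fun D => D.Nonempty ∧ G.IsBridgeless D) C := by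
  simp only [IsCycle, forall_isCut_ncard_inter_ne_one_iff, minimal_iff_forall_lt, not_and,
    and_assoc]

lemma IsCycle.reachable_diff (hC : G.IsCycle C) (he : e ∈ C) :
    G.Reachable (C \ {e}) (G.src e) (G.tgt e) :=
  (isCycle_iff_minimal.1 hC).1.2 e he

/-- The cycle is a minimal `C ∋ e` inside `insert e A` whose other edges still connect the ends
of `e`. -/
lemma exists_isCycle_of_reachable (he : e ∉ A) (h : G.Reachable A (G.src e) (G.tgt e)) :
    ∃ C, G.IsCycle C ∧ e ∈ C ∧ C ⊆ insert e A := by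
  obtain ⟨C, ⟨heC, hCA, hC⟩, hCmin⟩ := exists_minimal_of_wellFoundedLT
    (fun C : Set E => e ∈ C ∧ C ⊆ insert e A ∧ G.Reachable (C \ {e}) (G.src e) (G.tgt e))
    ⟨insert e A, Set.mem_insert e A, subset_rfl, by rwa [Set.insert_sdiff_self_of_notMem he]⟩
  have hCmin' : ∀ g ∈ C, g ≠ e → ¬ G.Reachable ((C \ {g}) \ {e}) (G.src e) (G.tgt e) :=
    fun g hg hge hr => (hCmin (y := C \ {g}) ⟨⟨heC, hge.symm⟩, Set.sdiff_subset.trans hCA, hr⟩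
      Set.sdiff_subset hg).2 rfl
  have hbridgeless : G.IsBridgeless C := by
    intro g hg
    by_cases hge : g = e
    · exact hge ▸ hC
    refine reachable_of_reachable_insert Set.sdiff_subset
      (reachable_of_mem ⟨heC, Ne.symm hge⟩) (hC.mono ?_) (hCmin' g hg hge)
    intro x ⟨hxC, hxe⟩
    by_cases hxg : x = g
    · exact .inl hxg
    · exact .inr ⟨⟨hxC, hxg⟩, hxe⟩
  refine ⟨C, isCycle_iff_minimal.2 (minimal_iff_forall_lt.2 ⟨⟨⟨e, heC⟩, hbridgeless⟩,
    fun C' hC'C ⟨⟨g, hg⟩, hC'⟩ => ?_⟩), heC, hCA⟩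
  by_cases heC' : e ∈ C'
  · exact hC'C.not_subset (hCmin (y := C') ⟨heC', hC'C.subset.trans hCA, hC' e heC'⟩ hC'C.le)
  refine hCmin' g (hC'C.subset hg) (ne_of_mem_of_not_mem hg heC') (hC.of_forall_mem ?_)
  intro x ⟨hxC, hxe⟩
  by_cases hxg : x = g
  · subst hxg
    exact (hC' x hg).mono fun y hy =>
      ⟨⟨hC'C.subset hy.1, hy.2⟩, ne_of_mem_of_not_mem hy.1 heC'⟩
  · exact reachable_of_mem ⟨⟨hxC, hxg⟩, hxe⟩

end Cycle

section Activity

variable [Finite V] [Finite E] [LinearOrder E] {S : Set E} {a e : E}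

lemma mem_Lact_iff : e ∈ G.Lact S ↔ G.Reachable {f ∈ S | e < f} (G.src e) (G.tgt e) := by
  constructor
  · rintro ⟨C, hC, heC, hCS, hCe⟩
    exact (hC.reachable_diff heC).mono fun f hf =>
      ⟨(hCS f hf.1).resolve_left hf.2, lt_of_le_of_ne (hCe f hf.1) (Ne.symm hf.2)⟩
  · intro h
    obtain ⟨C, hC, heC, hCS⟩ := exists_isCycle_of_reachable (fun he => lt_irrefl e he.2) h
    exact ⟨C, hC, heC, fun f hf => (hCS hf).imp id (·.1),
      fun f hf => (hCS hf).elim (·.ge) (·.2.le)⟩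

lemma mem_Lact_insert_of_lt (hae : a < e) : e ∈ G.Lact (insert a S) ↔ e ∈ G.Lact S := by
  have hS : {f ∈ insert a S | e < f} = {f ∈ S | e < f} := by
    ext f
    simp only [Set.mem_ofPred_eq, Set.mem_insert_iff, or_and_right, or_iff_right_iff_imp,
      and_imp]
    rintro rfl hef
    exact absurd hae hef.not_gt
  rw [mem_Lact_iff, mem_Lact_iff, hS]

lemma mem_Lact_insert_self (ha : ∀ x ∈ S, a < x) :
    a ∈ G.Lact (insert a S) ↔ G.Reachable S (G.src a) (G.tgt a) := by
  have hS : {f ∈ insert a S | a < f} = S := by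
    ext f
    simp only [Set.mem_ofPred_eq, Set.mem_insert_iff]
    exact ⟨fun ⟨hf, haf⟩ => hf.resolve_left haf.ne', fun hf => ⟨.inr hf, ha f hf⟩⟩
  rw [mem_Lact_iff, hS]

lemma Lact_insert_inter_insert (ha : ∀ x ∈ S, a < x) :
    G.Lact (insert a S) ∩ insert a S = if G.Reachable S (G.src a) (G.tgt a)
      then insert a (G.Lact S ∩ S) else G.Lact S ∩ S := by
  have haS : a ∉ S := fun h => lt_irrefl a (ha a h)
  ext e
  by_cases hea : e = a
  · subst hea
    split_ifs with h <;> simp [mem_Lact_insert_self ha, h, haS]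
  by_cases heS : e ∈ S
  · split_ifs <;> simp [mem_Lact_insert_of_lt (ha e heS), hea, heS]
  · split_ifs <;> simp [hea, heS]

lemma ncard_Lact_inter_add_card (s : Finset E) :
    (G.Lact s ∩ s).ncard + Nat.card V = G.kappa s + s.card := by
  induction s using Finset.induction_on_min with
  | empty => simp [kappa_empty]
  | insert a s ha ih =>
    have haS : a ∉ s := fun h => lt_irrefl a (ha a h)
    rw [Finset.coe_insert, Lact_insert_inter_insert ha, Finset.card_insert_of_notMem haS]
    split_ifs with h
    · rw [Set.ncard_insert_of_notMem (fun h => haS h.2), kappa_insert_of_reachable h]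
      omega
    · rw [kappa_insert_of_not_reachable h] at ih
      omega

end Activity

end OGraph

/-- Gordon–Traldi: `|L̂(S) ∩ S| = κ(S) + |S| − n` for every
spanning subgraph `S`, where `n = |V(G)|`. -/
theorem Lact_inter_ncard {V E : Type} [Fintype V] [Fintype E] [LinearOrder E]
    (G : OGraph V E) (S : Set E) :
    (G.Lact S ∩ S).ncard = G.kappa S + S.ncard - Fintype.card V := by
  have h := G.ncard_Lact_inter_add_card S.toFinset
  rw [Set.coe_toFinset, ← Set.ncard_eq_toFinset_card', Nat.card_eq_fintype_card] at h
  omega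
end

section
/- Let G be a graph with a total order on its edges. For every spanning subgraph S ⊆ E(G), the set of cut active edges and the set of cycle active edges of S are disjoint: Î(S) ∩ L̂(S) = ∅. -/
open scoped Classical

theorem Set.inter_eq_singleton_of_subset_insert {α : Type*} {C D S : Set α} {e : α}
    (heC : e ∈ C) (heD : e ∈ D) (hCS : ∀ f ∈ C, f ≠ e → f ∉ S) (hDS : D ⊆ insert e S) :
    C ∩ D = {e} := by
  refine Set.eq_singleton_iff_unique_mem.2 ⟨⟨heC, heD⟩, fun f ⟨hfC, hfD⟩ => ?_⟩
  by_contra hfe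
  exact hCS f hfC hfe ((hDS hfD).resolve_left hfe)

namespace OrGraph

variable {V E : Type} {G : OrGraph V E}

theorem IsCycle.inter_isCut_ne_singleton {C D : Set E} (hC : G.IsCut C) (hD : G.IsCycle D)
    (e : E) : C ∩ D ≠ {e} := fun h =>
  hD.2.1 C hC (by rw [h, Set.ncard_singleton])

end OrGraph

theorem Iact_inter_Lact_general {V E : Type} [LinearOrder E]
    (G : OrGraph V E) (S : Set E) :
    G.Iact S ∩ G.Lact S = ∅ := by
  refine Set.eq_empty_of_forall_notMem fun e ⟨⟨C, hC, heC, hCS, _⟩, ⟨D, hD, heD, hDS, _⟩⟩ => ?_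
  exact hD.inter_isCut_ne_singleton hC e
    (Set.inter_eq_singleton_of_subset_insert heC heD hCS hDS)

/-- the cut active and cycle active edges of any spanning
subgraph are disjoint: `Î(S) ∩ L̂(S) = ∅`. -/
theorem Iact_inter_Lact {V E : Type} [Fintype V] [Fintype E] [LinearOrder E]
    (G : OrGraph V E) (S : Set E) :
    G.Iact S ∩ G.Lact S = ∅ :=
  Iact_inter_Lact_general G S
end
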